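/- arXiv:1903.08091 — 7 statements merged into one kernel-verified Lean document; each statement's English description precedes it below -/
import Mathlib

section
/- For every regular uncountable cardinal κ, the map ⊕ is injective: if s, t, s', t' are sequences of ordinals < κ with lh(s) = lh(t) ≤ κ, lh(s') = lh(t') ≤ κ, and s ⊕ t = s' ⊕ t', then s = s' and t = t'. -/
/-- `Hes` is the Hessenberg pairing of ordinals: the unique surjective binary function
on ordinals such that `Hes α β ≤ Hes α' β'` iff `max α β < max α' β'`, or the maxima
are equal and `(α, β)` is lexicographically at most `(α', β')`. -/
def HesProp (Hes : Ordinal → Ordinal → Ordinal) : Prop :=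
  (∀ δ : Ordinal, ∃ α β : Ordinal, Hes α β = δ) ∧
    ∀ α β α' β' : Ordinal,
      Hes α β ≤ Hes α' β' ↔
        (max α β < max α' β' ∨
          (max α β = max α' β' ∧ (α < α' ∨ (α = α' ∧ β ≤ β'))))

/-- The pointwise formula for the map `⊕` on pairs of ordinal sequences of the same
length (sequences are coded as total functions on the ordinals; only values at
positions below the length matter).  With `ρ(γ,γ') = Hes(γ,γ') + 1`, the recursive
definition of `⊕` gives `(s ⊕ t)(0) = ρ(s 0, t 0)` and, for positions `α > 0`,
`(s ⊕ t)(α) = ρ((sup_{β ≤ α} s β) + ω, ρ(s α, t α))`. -/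
noncomputable def oplusPt (Hes : Ordinal → Ordinal → Ordinal) (s t : Ordinal → Ordinal)
    (α : Ordinal) : Ordinal :=
  if α = 0 then Hes (s 0) (t 0) + 1
  else Hes (sSup (s '' Set.Iic α) + Ordinal.omega0) (Hes (s α) (t α) + 1) + 1


lemma hes_inj {Hes : Ordinal → Ordinal → Ordinal} (hHes : HesProp Hes)
    {a b a' b' : Ordinal} (h : Hes a b = Hes a' b') : a = a' ∧ b = b' := by
  obtain ⟨-, hord⟩ := hHes
  have h1 := (hord a b a' b').mp h.le
  have h2 := (hord a' b' a b).mp h.ge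
  rcases h1 with h1 | ⟨hm1, h1⟩
  · rcases h2 with h2 | ⟨hm2, h2⟩
    · exact absurd h1 (lt_asymm h2)
    · exact absurd h1 (hm2.le.not_gt)
  · rcases h2 with h2 | ⟨hm2, h2⟩
    · exact absurd h2 (hm1.le.not_gt)
    · rcases h1 with h1 | ⟨ha, hb⟩
      · rcases h2 with h2 | ⟨ha', _⟩
        · exact absurd h1 (lt_asymm h2)
        · exact absurd h1 (ha'.le.not_gt)
      · rcases h2 with h2 | ⟨_, hb'⟩
        · exact absurd h2 (ha.le.not_gt)
        · exact ⟨ha, le_antisymm hb hb'⟩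

lemma succ_cancel {a b : Ordinal} (h : a + 1 = b + 1) : a = b := by
  rw [Ordinal.add_one_eq_succ, Ordinal.add_one_eq_succ] at h
  exact Order.succ_injective h

/-- For a regular uncountable cardinal `κ`, the map `⊕` is injective: if `s, t` and
`s', t'` are pairs of sequences of ordinals `< κ`, of lengths `γ, γ' ≤ κ`
respectively, and `s ⊕ t = s' ⊕ t'` (as sequences), then `s = s'` and `t = t'`. -/
theorem stmt1 (κ : Cardinal) (hreg : κ.IsRegular) (hunc : Cardinal.aleph0 < κ)
    (Hes : Ordinal → Ordinal → Ordinal) (hHes : HesProp Hes)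
    (γ γ' : Ordinal) (hγ : γ ≤ κ.ord) (hγ' : γ' ≤ κ.ord)
    (s t s' t' : Ordinal → Ordinal)
    (hs : ∀ α < γ, s α < κ.ord) (ht : ∀ α < γ, t α < κ.ord)
    (hs' : ∀ α < γ', s' α < κ.ord) (ht' : ∀ α < γ', t' α < κ.ord)
    (hlen : γ = γ')
    (heq : ∀ α < γ, oplusPt Hes s t α = oplusPt Hes s' t' α) :
    (∀ α < γ, s α = s' α) ∧ (∀ α < γ, t α = t' α) := by
  have key : ∀ α < γ, s α = s' α ∧ t α = t' α := by
    intro α hα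
    have h := heq α hα
    unfold oplusPt at h
    by_cases h0 : α = 0
    · simp only [h0, if_pos rfl] at h
      have := hes_inj hHes (succ_cancel h)
      rw [h0]; exact this
    · simp only [if_neg h0] at h
      have h2 := (hes_inj hHes (succ_cancel h)).2
      exact hes_inj hHes (succ_cancel h2)
  exact ⟨fun α hα => (key α hα).1, fun α hα => (key α hα).2⟩
end

section
/- For every uncountable cardinal κ with κ^{<κ} = κ, there is a map # defined on all sequences of ordinals < κ of successor length < κ, with values in κ, such that: (a) for all s, t of the same successor length < κ, #(s) ≤ #(s ⊕ t); and (b) for every γ < κ, the restriction of # to ^{γ+1}κ (sequences of length γ+1 with values < κ) is a bijection onto κ. -/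
/-!
Since `ρ` is injective, `s ↾ (γ + 1)` can be decoded from `(s ⊕ t) ↾ (γ + 1)` by a map `d` on
`^{γ+1}κ`, and `(s ⊕ t)(0) = ρ(s 0, t 0) > s 0`. So it suffices to well-order `^{γ+1}κ`, a set of
size `κ` because `κ^{<κ} = κ`, in order type `κ` such that `d v` comes before `v` whenever
`(d v)(0) < v(0)`. Enumerate `^{γ+1}κ` as `e : ^{γ+1}κ ≃ κ` and let `r v = sup_k e (d^k v)`, which
is `< κ` since `κ^{<κ} = κ` forces `κ` to be regular. Order `v` lexicographically by
`(r v, v 0, e v)`: then `r (d v) ≤ r v`, and `e` maps the initial segment below `v` into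
`r v + 1`, so all proper initial segments have size `< κ` and the order type is exactly `κ`.
-/

open Ordinal Cardinal Set

universe u

namespace Cardinal

theorem isRegular_of_powerlt_self {κ : Cardinal} (hκ : ℵ₀ ≤ κ) (h : κ ^< κ = κ) :
    κ.IsRegular := by
  refine ⟨hκ, not_lt.1 fun hcof => ?_⟩
  exact ((lt_power_cof_ord hκ).trans_le ((le_powerlt κ hcof).trans h.le)).false

theorem mk_Iio_add_one_arrow_Iio_ord {κ : Cardinal.{u}} (hκ : ℵ₀ ≤ κ) (h : κ ^< κ = κ)
    {γ : Ordinal.{u}} (hγ : γ < κ.ord) : #(Iio (γ + 1) → Iio κ.ord) = lift.{u + 1} κ := by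
  rw [← power_def, mk_Iio_ordinal, mk_Iio_ordinal, card_ord, ← lift_power, lift_inj]
  refine le_antisymm ((le_powerlt κ (lt_ord.1 ?_)).trans h.le) (self_le_power κ ?_)
  · exact (isSuccLimit_ord hκ).add_one_lt hγ
  · rw [Ordinal.card_add_one]
    exact le_add_self

end Cardinal

theorem Ordinal.type_eq_ord_of_forall_mk_lt {X : Type*} (r : X → X → Prop) [IsWellOrder X r]
    {κ : Cardinal} (hX : #X = κ) (hr : ∀ x, #{ y // r y x } < κ) : type r = κ.ord := by
  refine le_antisymm ?_ (ord_le.2 (by rw [card_type, hX]))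
  by_contra! h
  obtain ⟨x, hx⟩ := typein_surj r h
  exact (hr x).ne (by rw [← card_typein, hx, card_ord])

theorem Cardinal.exists_equiv_Iio_ord_apply_lt_of_lt {X : Type (u + 1)} {κ : Cardinal.{u}}
    (hκ : ℵ₀ < κ.ord.cof) (hX : #X = lift.{u + 1} κ) (p : X → X)
    {β : Type*} [LinearOrder β] [WellFoundedLT β] (c : X → β) :
    ∃ F : X ≃ Iio κ.ord, ∀ x, c (p x) < c x → F (p x) < F x := by
  obtain ⟨e⟩ : Nonempty (X ≃ Iio κ.ord) :=
    Cardinal.eq.1 (by rw [hX, mk_Iio_ordinal, card_ord])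
  set r : X → Ordinal := fun x => ⨆ k : ℕ, (e (p^[k] x) : Ordinal)
  have hbdd (x : X) : BddAbove (range fun k : ℕ => (e (p^[k] x) : Ordinal)) :=
    Ordinal.bddAbove_of_small
  have le_r (x : X) : (e x : Ordinal) ≤ r x := le_ciSup (hbdd x) 0
  have r_apply_le (x : X) : r (p x) ≤ r x := ciSup_le fun k => by
    simpa only [← Function.iterate_succ_apply] using le_ciSup (hbdd x) (k + 1)
  have r_lt (x : X) : r x < κ.ord :=
    lift_iSup_lt_of_lt_cof (by simpa [← Ordinal.lift_cof] using hκ) fun k => (e _).2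
  let key : X ↪ Ordinal ×ₗ β ×ₗ Ordinal :=
    ⟨fun x => toLex (r x, toLex (c x, (e x : Ordinal))), fun x y h => by
      simp only [toLex_inj, Prod.mk.injEq] at h
      exact e.injective (Subtype.ext h.2.2)⟩
  let R : X → X → Prop := key ⁻¹'o (· < ·)
  have : IsWellOrder X R := (RelEmbedding.preimage key (· < ·)).isWellOrder
  have hR (x : X) : #{ y // R y x } < lift.{u + 1} κ := by
    have hinj : Function.Injective fun y : { y // R y x } =>
        (⟨e y, (le_r y).trans (Prod.Lex.monotone_fst _ _ y.2.le)⟩ : Iic (r x)) := by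
      intro y y' h
      have := congrArg Subtype.val h
      exact Subtype.ext (e.injective (Subtype.ext this))
    refine (mk_le_of_injective hinj).trans_lt ?_
    rw [← Order.Iio_succ, mk_Iio_ordinal, lift_lt, ← lt_ord]
    exact (isSuccLimit_ord (hκ.le.trans (cof_ord_le κ))).succ_lt (r_lt x)
  have htype : type R = typeLT (Iio κ.ord) := by
    rw [type_lt_Iio, lift_ord, Ordinal.type_eq_ord_of_forall_mk_lt R hX hR]
  obtain ⟨F⟩ := type_eq.1 htype
  refine ⟨F.toEquiv, fun x hx => F.map_rel_iff.2 ?_⟩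
  show toLex (r (p x), _) < toLex (r x, _)
  rcases (r_apply_le x).lt_or_eq with h | h
  · exact Prod.Lex.toLex_lt_toLex.2 (Or.inl h)
  · exact Prod.Lex.toLex_lt_toLex.2 (Or.inr ⟨h, Prod.Lex.toLex_lt_toLex.2 (Or.inl hx)⟩)

section SequenceIndexing

variable {θ : Ordinal.{u}}

def restrictIio {o : Ordinal.{u}} (s : Ordinal → Ordinal) (hs : ∀ α < o, s α < θ) :
    Iio o → Iio θ :=
  fun α => ⟨s α, hs α α.2⟩

theorem restrictIio_congr {o : Ordinal.{u}} {s s' : Ordinal → Ordinal}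
    (h : ∀ α < o, s α = s' α) (hs : ∀ α < o, s α < θ) (hs' : ∀ α < o, s' α < θ) :
    restrictIio s hs = restrictIio s' hs' :=
  funext fun α => Subtype.ext (h α α.2)

noncomputable def extendIio {o : Ordinal.{u}} (v : Iio o → Iio θ) (α : Ordinal) : Ordinal :=
  if h : α < o then v ⟨α, h⟩ else 0

theorem extendIio_lt {o : Ordinal.{u}} (v : Iio o → Iio θ) : ∀ α < o, extendIio v α < θ :=
  fun α h => by rw [extendIio, dif_pos h]; exact (v _).2

theorem restrictIio_extendIio {o : Ordinal.{u}} (v : Iio o → Iio θ) :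
    restrictIio (extendIio v) (extendIio_lt v) = v :=
  funext fun α => Subtype.ext (dif_pos α.2)

variable (F : ∀ γ < θ, (Iio (γ + 1) → Iio θ) ≃ Iio θ)

open Classical in
noncomputable def sharpOf (γ : Ordinal) (s : Ordinal → Ordinal) : Ordinal :=
  if h : γ < θ ∧ ∀ α < γ + 1, s α < θ then F γ h.1 (restrictIio s h.2) else 0

theorem sharpOf_of_lt {γ : Ordinal} (hγ : γ < θ) {s : Ordinal → Ordinal}
    (hs : ∀ α < γ + 1, s α < θ) : sharpOf F γ s = F γ hγ (restrictIio s hs) :=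
  dif_pos ⟨hγ, hs⟩

theorem sharpOf_congr {γ : Ordinal} {s s' : Ordinal → Ordinal}
    (h : ∀ α < γ + 1, s α = s' α) : sharpOf F γ s = sharpOf F γ s' := by
  have hbound : (∀ α < γ + 1, s α < θ) ↔ ∀ α < γ + 1, s' α < θ :=
    forall₂_congr fun α hα => by rw [h α hα]
  unfold sharpOf
  split_ifs with hs hs' hs'
  · rw [restrictIio_congr h hs.2 hs'.2]
  · exact absurd ⟨hs.1, hbound.1 hs.2⟩ hs'
  · exact absurd ⟨hs'.1, hbound.2 hs'.2⟩ hs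
  · rfl

theorem sharpOf_lt_of_lt {γ : Ordinal} (hγ : γ < θ) {s : Ordinal → Ordinal}
    (hs : ∀ α < γ + 1, s α < θ) : sharpOf F γ s < θ := by
  rw [sharpOf_of_lt F hγ hs]
  exact (F γ hγ _).2

theorem eq_of_sharpOf_eq {γ : Ordinal} (hγ : γ < θ) {s s' : Ordinal → Ordinal}
    (hs : ∀ α < γ + 1, s α < θ) (hs' : ∀ α < γ + 1, s' α < θ)
    (h : sharpOf F γ s = sharpOf F γ s') : ∀ α < γ + 1, s α = s' α := by
  rw [sharpOf_of_lt F hγ hs, sharpOf_of_lt F hγ hs'] at h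
  have hrestrict := (F γ hγ).injective (Subtype.ext h)
  exact fun α hα => congrArg Subtype.val (congrFun hrestrict ⟨α, hα⟩)

theorem exists_sharpOf_eq {γ : Ordinal} (hγ : γ < θ) {δ : Ordinal} (hδ : δ < θ) :
    ∃ s : Ordinal → Ordinal, (∀ α < γ + 1, s α < θ) ∧ sharpOf F γ s = δ := by
  refine ⟨extendIio ((F γ hγ).symm ⟨δ, hδ⟩), extendIio_lt _, ?_⟩
  rw [sharpOf_of_lt F hγ (extendIio_lt _), restrictIio_extendIio, Equiv.apply_symm_apply]

end SequenceIndexing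

namespace HesProp

variable {Hes : Ordinal.{u} → Ordinal.{u} → Ordinal.{u}}

theorem hes_le_hes_iff (hHes : HesProp Hes) {a b a' b' : Ordinal} :
    Hes a b ≤ Hes a' b' ↔
      toLex (max a b, toLex (a, b)) ≤ toLex (max a' b', toLex (a', b')) := by
  simp only [hHes.2, Prod.Lex.toLex_le_toLex]

theorem hes_lt_hes_iff (hHes : HesProp Hes) {a b a' b' : Ordinal} :
    Hes a b < Hes a' b' ↔
      toLex (max a b, toLex (a, b)) < toLex (max a' b', toLex (a', b')) := by
  simp only [← not_le, hes_le_hes_iff hHes]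

theorem injective_uncurry (hHes : HesProp Hes) :
    Function.Injective fun p : Ordinal × Ordinal => Hes p.1 p.2 := by
  rintro ⟨a, b⟩ ⟨a', b'⟩ h
  have := le_antisymm ((hes_le_hes_iff hHes).1 h.le) ((hes_le_hes_iff hHes).1 h.ge)
  simp only [toLex_inj, Prod.mk.injEq] at this
  exact Prod.ext this.2.1 this.2.2

theorem max_le_hes (hHes : HesProp Hes) (a b : Ordinal) : max a b ≤ Hes a b := by
  have hmono : StrictMono (Hes 0) := fun b b' hb => by
    simp [hes_lt_hes_iff hHes, Prod.Lex.toLex_lt_toLex, hb]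
  refine hmono.le_apply.trans ((hes_le_hes_iff hHes).2 ?_)
  simp only [Prod.Lex.toLex_le_toLex]
  obtain rfl | ha := eq_zero_or_pos a <;> simp [*]

theorem hes_lt_ord (hHes : HesProp Hes) {κ : Cardinal.{u}} (hκ : ℵ₀ ≤ κ) {a b : Ordinal}
    (ha : a < κ.ord) (hb : b < κ.ord) : Hes a b < κ.ord := by
  set m := max a b
  have hsub : Iio (Hes a b) ⊆
      (fun p : Ordinal × Ordinal => Hes p.1 p.2) '' (Iic m ×ˢ Iic m) := by
    intro ξ hξ
    obtain ⟨x, y, rfl⟩ := hHes.1 ξ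
    have hxy : max x y ≤ m := Prod.Lex.monotone_fst _ _ ((hes_lt_hes_iff hHes).1 hξ).le
    exact ⟨(x, y), ⟨(le_max_left x y).trans hxy, (le_max_right x y).trans hxy⟩, rfl⟩
  have hm : (Order.succ m).card < κ := lt_ord.1 ((isSuccLimit_ord hκ).succ_lt (max_lt ha hb))
  have := (mk_le_mk_of_subset hsub).trans mk_image_le
  rw [mk_setProd, ← Order.Iio_succ, Cardinal.mk_Iio_ordinal,
    Cardinal.mk_Iio_ordinal, ← Cardinal.lift_mul] at this
  rw [lt_ord]
  exact (Cardinal.lift_le.1 this).trans_lt (mul_lt_of_lt hκ hm hm)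

noncomputable def equiv (hHes : HesProp Hes) : Ordinal × Ordinal ≃ Ordinal :=
  Equiv.ofBijective (fun p => Hes p.1 p.2)
    ⟨injective_uncurry hHes, fun δ => let ⟨a, b, h⟩ := hHes.1 δ; ⟨(a, b), h⟩⟩

noncomputable def unpairPred (hHes : HesProp Hes) (z : Ordinal) : Ordinal × Ordinal :=
  hHes.equiv.symm (Ordinal.pred z)

theorem unpairPred_hes_add_one (hHes : HesProp Hes) (a b : Ordinal) :
    hHes.unpairPred (Hes a b + 1) = (a, b) := by
  rw [unpairPred, Ordinal.pred_add_one, Equiv.symm_apply_eq]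
  rfl

theorem hes_unpairPred (hHes : HesProp Hes) (z : Ordinal) :
    Hes (hHes.unpairPred z).1 (hHes.unpairPred z).2 = Ordinal.pred z :=
  hHes.equiv.apply_symm_apply _

theorem unpairPred_fst_le (hHes : HesProp Hes) (z : Ordinal) : (hHes.unpairPred z).1 ≤ z :=
  ((le_max_left _ _).trans (hHes.max_le_hes _ _)).trans
    ((hHes.hes_unpairPred z).trans_le (Ordinal.pred_le_self z))

theorem unpairPred_snd_le (hHes : HesProp Hes) (z : Ordinal) : (hHes.unpairPred z).2 ≤ z :=
  ((le_max_right _ _).trans (hHes.max_le_hes _ _)).trans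
    ((hHes.hes_unpairPred z).trans_le (Ordinal.pred_le_self z))

noncomputable def oplusDecode (hHes : HesProp Hes) (α z : Ordinal) : Ordinal :=
  if α = 0 then (hHes.unpairPred z).1 else (hHes.unpairPred (hHes.unpairPred z).2).1

theorem oplusDecode_oplusPt (hHes : HesProp Hes) (s t : Ordinal → Ordinal) (α : Ordinal) :
    hHes.oplusDecode α (oplusPt Hes s t α) = s α := by
  unfold oplusDecode oplusPt
  split_ifs with h
  · rw [unpairPred_hes_add_one, h]
  · rw [unpairPred_hes_add_one, unpairPred_hes_add_one]

theorem oplusDecode_le (hHes : HesProp Hes) (α z : Ordinal) : hHes.oplusDecode α z ≤ z := by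
  unfold oplusDecode
  split_ifs
  · exact hHes.unpairPred_fst_le z
  · exact (hHes.unpairPred_fst_le _).trans (hHes.unpairPred_snd_le z)

theorem lt_oplusPt_zero (hHes : HesProp Hes) (s t : Ordinal → Ordinal) :
    s 0 < oplusPt Hes s t 0 := by
  rw [oplusPt, if_pos rfl]
  exact ((le_max_left _ _).trans (hHes.max_le_hes _ _)).trans_lt (Order.lt_add_one_iff.2 le_rfl)

theorem oplusPt_lt_ord (hHes : HesProp Hes) {κ : Cardinal.{u}} (hκ : ℵ₀ < κ)
    (hreg : κ.IsRegular) {s t : Ordinal → Ordinal} {α : Ordinal} (hα : α < κ.ord)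
    (hs : ∀ β ≤ α, s β < κ.ord) (ht : t α < κ.ord) : oplusPt Hes s t α < κ.ord := by
  have hlim := isSuccLimit_ord hκ.le
  have hρ : ∀ {a b}, a < κ.ord → b < κ.ord → Hes a b + 1 < κ.ord := fun ha hb =>
    hlim.add_one_lt (hHes.hes_lt_ord hκ.le ha hb)
  unfold oplusPt
  split_ifs with h0
  · subst h0
    exact hρ (hs 0 le_rfl) ht
  · have hsup : sSup (s '' Iic α) < κ.ord := by
      refine sSup_lt_of_lt_cof (mk_image_le.trans_lt ?_)
        (by rintro _ ⟨β, hβ, rfl⟩; exact hs β hβ)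
      rw [← Order.Iio_succ, Cardinal.mk_Iio_ordinal, ← Ordinal.lift_cof, hreg.cof_ord,
        Cardinal.lift_lt, ← lt_ord]
      exact hlim.succ_lt hα
    exact hρ ((isPrincipal_add_ord hκ.le) hsup (omega0_lt_ord.2 hκ)) (hρ (hs α le_rfl) ht)

noncomputable def decodeSeq (hHes : HesProp Hes) {o θ : Ordinal.{u}} (v : Iio o → Iio θ) :
    Iio o → Iio θ :=
  fun α => ⟨hHes.oplusDecode α (v α), (hHes.oplusDecode_le _ _).trans_lt (v α).2⟩

theorem decodeSeq_restrictIio_oplusPt (hHes : HesProp Hes) {o θ : Ordinal.{u}}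
    {s t : Ordinal → Ordinal} (hs : ∀ α < o, s α < θ)
    (hst : ∀ α < o, oplusPt Hes s t α < θ) :
    hHes.decodeSeq (restrictIio (oplusPt Hes s t) hst) = restrictIio s hs :=
  funext fun α => Subtype.ext (hHes.oplusDecode_oplusPt s t α)

end HesProp

/-- For every uncountable cardinal `κ` with `κ^{<κ} = κ` there is a map `#` on the
sequences of ordinals `< κ` of successor length `< κ` (a sequence of length `γ + 1`
being coded as the pair of `γ` and a total function on the ordinals) such that:
it only depends on the values below the length; (a) `#(s) ≤ #(s ⊕ t)` for `s, t` of
the same successor length; and (b) for each `γ < κ`, `#` restricted to `^{γ+1}κ` is a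
bijection onto `κ`. -/
theorem stmt2 (κ : Cardinal) (hunc : Cardinal.aleph0 < κ) (hks : κ ^< κ = κ)
    (Hes : Ordinal → Ordinal → Ordinal) (hHes : HesProp Hes) :
    ∃ sharp : Ordinal → (Ordinal → Ordinal) → Ordinal,
      (∀ γ : Ordinal, ∀ s s' : Ordinal → Ordinal,
        (∀ α < γ + 1, s α = s' α) → sharp γ s = sharp γ s') ∧
      (∀ γ < κ.ord, ∀ s t : Ordinal → Ordinal,
        (∀ α < γ + 1, s α < κ.ord) → (∀ α < γ + 1, t α < κ.ord) →
        sharp γ s ≤ sharp γ (oplusPt Hes s t)) ∧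
      (∀ γ < κ.ord,
        (∀ s : Ordinal → Ordinal, (∀ α < γ + 1, s α < κ.ord) → sharp γ s < κ.ord) ∧
        (∀ s s' : Ordinal → Ordinal, (∀ α < γ + 1, s α < κ.ord) →
          (∀ α < γ + 1, s' α < κ.ord) → sharp γ s = sharp γ s' →
          ∀ α < γ + 1, s α = s' α) ∧
        (∀ δ < κ.ord, ∃ s : Ordinal → Ordinal,
          (∀ α < γ + 1, s α < κ.ord) ∧ sharp γ s = δ)) := by
  have hreg := Cardinal.isRegular_of_powerlt_self hunc.le hks
  have h0 (γ : Ordinal) : (0 : Ordinal) < γ + 1 := add_pos_of_right zero_lt_one γ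
  have hF (γ : Ordinal) (hγ : γ < κ.ord) : ∃ F : (Iio (γ + 1) → Iio κ.ord) ≃ Iio κ.ord,
      ∀ v, (hHes.decodeSeq v ⟨0, h0 γ⟩ : Ordinal) < v ⟨0, h0 γ⟩ →
        F (hHes.decodeSeq v) < F v :=
    exists_equiv_Iio_ord_apply_lt_of_lt (by rwa [hreg.cof_ord])
      (mk_Iio_add_one_arrow_Iio_ord hunc.le hks hγ) hHes.decodeSeq
      fun v => (v ⟨0, h0 γ⟩ : Ordinal)
  choose F hF using hF
  refine ⟨sharpOf F, fun γ s s' => sharpOf_congr F, fun γ hγ s t hs ht => ?_,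
    fun γ hγ => ⟨fun s => sharpOf_lt_of_lt F hγ, fun s s' => eq_of_sharpOf_eq F hγ,
      fun δ => exists_sharpOf_eq F hγ⟩⟩
  have hst (α : Ordinal) (hα : α < γ + 1) : oplusPt Hes s t α < κ.ord :=
    hHes.oplusPt_lt_ord hunc hreg ((Order.lt_add_one_iff.1 hα).trans_lt hγ)
      (fun β hβ => hs β (hβ.trans_lt hα)) (ht α hα)
  rw [sharpOf_of_lt F hγ hs, sharpOf_of_lt F hγ hst,
    ← hHes.decodeSeq_restrictIio_oplusPt hs hst]
  refine (hF γ hγ _ ?_).le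
  rw [hHes.decodeSeq_restrictIio_oplusPt hs hst]
  exact hHes.lt_oplusPt_zero s t
end

section
/- (i) If 𝓛 and 𝓛' are labels of different types (each of Type I, II, or III as defined in the context), then there is no order-embedding of 𝓛 into 𝓛'. (ii) If u, v ∈ U are distinct, then there is no order-embedding of the Type III label 𝓛*ᵤ into 𝓛*ᵥ. -/
/-!
In the labels of types I and III, an element lying below two incomparable elements must be a
point of the linear part `κ` (two pairs above a common pair sit in the same column), and every
point of `κ` has this property because `L` has no maximum. Hence an embedding between two such
labels maps `κ` into `κ` and restricts to an embedding of the underlying linear orders, which the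
hypotheses forbid. In a type II label the incomparable elements `a` and `b` both lie below two
incomparable elements, so they cannot be sent into a linear part; and a type II label has fewer
than `κ` elements, so nothing containing `κ` embeds into it.
-/

/-- The underlying set `κ` of the labels: the ordinals below `κ`. -/
abbrev KSet (κ : Cardinal) := {o : Ordinal // o < κ.ord}

/-- Domain of a label of type I: `κ ∪ {(α,β) : 0 < α < κ, β < α}`. -/
def D1 (κ : Cardinal) :=
  KSet κ ⊕ {p : KSet κ × KSet κ // 0 < (p.1).1 ∧ (p.2).1 < (p.1).1}

/-- The partial order of a label of type I built from a linear order `L` on `κ`. -/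
def ord1 {κ : Cardinal} (L : KSet κ → KSet κ → Prop) : D1 κ → D1 κ → Prop
  | .inl α, .inl α' => L α α'
  | .inl α', .inr p => L α' p.1.1
  | .inr p, .inr q => p.1.1 = q.1.1 ∧ (p.1.2).1 ≤ (q.1.2).1
  | .inr _, .inl _ => False

/-- Domain of a label of type II with parameter `θ`: the disjoint union of `θ`,
`ω* = {n* : n ∈ ω}` and the six-element set `{a, a⁺, a⁻, b, b⁺, b⁻}`
(coded as `Fin 6` via `a = 0, a⁺ = 1, a⁻ = 2, b = 3, b⁺ = 4, b⁻ = 5`). -/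
def D2 (θ : Ordinal) := {o : Ordinal // o < θ} ⊕ (ℕ ⊕ Fin 6)

/-- The partial order of a label of type II: ordinals in their usual order;
`n* ≤ m*` iff `n ≥ m`; `x ≤ x⁺, x⁻` for `x ∈ {a,b}`; every ordinal below every `n*`,
every `n*` below every element of the six-element set. -/
def ord2 {θ : Ordinal} : D2 θ → D2 θ → Prop
  | .inl α, .inl β => α.1 ≤ β.1
  | .inl _, .inr _ => True
  | .inr (.inl n), .inr (.inl m) => m ≤ n
  | .inr (.inl _), .inr (.inr _) => True
  | .inr (.inr x), .inr (.inr y) =>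
      x = y ∨ (x = 0 ∧ (y = 1 ∨ y = 2)) ∨ (x = 3 ∧ (y = 4 ∨ y = 5))
  | _, _ => False

/-- Domain of a label of type III: `κ ∪ {c} ∪ {(α,β) : 0 < α < κ, β < α}`. -/
def D3 (κ : Cardinal) :=
  KSet κ ⊕ (Unit ⊕ {p : KSet κ × KSet κ // 0 < (p.1).1 ∧ (p.2).1 < (p.1).1})

/-- The partial order of a label of type III built from a linear order `L` on `κ`:
like type I, with one extra point `c` above the minimum `0` and incomparable with
every other element. -/
def ord3 {κ : Cardinal} (L : KSet κ → KSet κ → Prop) : D3 κ → D3 κ → Prop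
  | .inl α, .inl α' => L α α'
  | .inl α, .inr (.inl _) => α.1 = 0
  | .inr (.inl _), .inr (.inl _) => True
  | .inl α', .inr (.inr p) => L α' p.1.1
  | .inr (.inr p), .inr (.inr q) => p.1.1 = q.1.1 ∧ (p.1.2).1 ≤ (q.1.2).1
  | _, _ => False

/-- An order-embedding of the relation `r` into the relation `r'`: an injection `f`
with `r x y ↔ r' (f x) (f y)`. -/
def RelEmb {A B : Type*} (r : A → A → Prop) (r' : B → B → Prop) : Prop :=
  ∃ f : A → B, Function.Injective f ∧ ∀ x y : A, r x y ↔ r' (f x) (f y)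

universe u

section BelowIncomparable

variable {A B A' B' : Type*}

def BelowIncomparable (r : A → A → Prop) (x : A) : Prop :=
  ∃ y z, r x y ∧ r x z ∧ ¬ r y z ∧ ¬ r z y

lemma BelowIncomparable.map {r : A → A → Prop} {s : B → B → Prop} {f : A → B}
    (hf : ∀ x y, r x y ↔ s (f x) (f y)) {x : A} (hx : BelowIncomparable r x) :
    BelowIncomparable s (f x) :=
  let ⟨y, z, hxy, hxz, hyz, hzy⟩ := hx
  ⟨f y, f z, (hf _ _).1 hxy, (hf _ _).1 hxz, mt (hf _ _).2 hyz, mt (hf _ _).2 hzy⟩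

lemma RelEmb.restrict_inl {r : A ⊕ B → A ⊕ B → Prop} {s : A' ⊕ B' → A' ⊕ B' → Prop}
    (hr : ∀ a, BelowIncomparable r (.inl a))
    (hs : ∀ x, BelowIncomparable s x → ∃ a, x = .inl a) (h : RelEmb r s) :
    RelEmb (fun a b => r (.inl a) (.inl b)) (fun a b => s (.inl a) (.inl b)) := by
  obtain ⟨f, hinj, hf⟩ := h
  choose g hg using fun a => hs _ ((hr a).map hf)
  refine ⟨g, fun a b hab => Sum.inl_injective (hinj ?_), fun a b => ?_⟩
  · rw [hg, hg, hab]
  · exact (hf _ _).trans (by rw [hg, hg])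

lemma not_relEmb_ord2 {θ : Ordinal} {s : A ⊕ B → A ⊕ B → Prop}
    (hs : ∀ x, BelowIncomparable s x → ∃ a, x = .inl a)
    (htotal : ∀ a b, s (.inl a) (.inl b) ∨ s (.inl b) (.inl a)) :
    ¬ RelEmb (ord2 (θ := θ)) s := by
  rintro ⟨f, -, hf⟩
  have hA : BelowIncomparable (ord2 (θ := θ)) (.inr (.inr 0)) :=
    ⟨.inr (.inr 1), .inr (.inr 2), by simp [ord2]⟩
  have hB : BelowIncomparable (ord2 (θ := θ)) (.inr (.inr 3)) :=
    ⟨.inr (.inr 4), .inr (.inr 5), by simp [ord2]⟩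
  obtain ⟨a, ha⟩ := hs _ (hA.map hf)
  obtain ⟨b, hb⟩ := hs _ (hB.map hf)
  rcases htotal a b with h | h <;> exact absurd ((hf _ _).2 (ha ▸ hb ▸ h)) (by simp [ord2])

end BelowIncomparable

lemma exists_two_above_ne {α : Type*} {r : α → α → Prop} [IsTrans α r] [Std.Antisymm r]
    (hnomax : ∀ x, ∃ y, x ≠ y ∧ r x y) (a z : α) :
    ∃ b c, b ≠ c ∧ b ≠ z ∧ c ≠ z ∧ r a b ∧ r a c := by
  obtain ⟨b₁, -, h₁⟩ := hnomax a
  obtain ⟨b₂, hb₁₂, h₂⟩ := hnomax b₁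
  obtain ⟨b₃, hb₂₃, h₃⟩ := hnomax b₂
  have hb₁₃ : b₁ ≠ b₃ := fun h => hb₁₂ (antisymm h₂ (h ▸ h₃))
  have h₁₂ := _root_.trans h₁ h₂
  have h₁₃ := _root_.trans h₁₂ h₃
  by_cases hz₁ : b₁ = z
  · exact ⟨b₂, b₃, hb₂₃, hz₁ ▸ hb₁₂.symm, hz₁ ▸ hb₁₃.symm, h₁₂, h₁₃⟩
  by_cases hz₂ : b₂ = z
  · exact ⟨b₁, b₃, hb₁₃, hz₁, hz₂ ▸ hb₂₃.symm, h₁, h₁₃⟩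
  · exact ⟨b₁, b₂, hb₁₂, hz₁, hz₂, h₁, h₁₂⟩

open Cardinal in
lemma not_injective_kSet_to_d2 {κ : Cardinal.{u}} (hκ : ℵ₀ < κ) {θ : Ordinal.{u}}
    (hθ : θ < κ.ord) (g : KSet κ → D2 θ) : ¬ Function.Injective g := by
  intro hg
  have hsmall : θ.card + ℵ₀ < κ := add_lt_of_lt hκ.le (lt_ord.mp hθ) hκ
  have hdom : #(KSet κ) = lift.{u + 1} κ := (mk_Iio_ordinal κ.ord).trans (by rw [card_ord])
  have hcod : #(D2 θ) ≤ lift.{u + 1} (θ.card + ℵ₀) := by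
    rw [D2, mk_sum, lift_add]
    gcongr
    · simp only [lift_id'.{u, u + 1}]
      exact (mk_Iio_ordinal θ).le
    · simp
  exact (lift_lt.mpr hsmall).not_ge (hdom ▸ (mk_le_of_injective hg).trans hcod)

lemma not_relEmb_ord2_of_sum {κ : Cardinal} (hκ : Cardinal.aleph0 < κ) {θ : Ordinal}
    (hθ : θ < κ.ord) {B : Type*} (r : KSet κ ⊕ B → KSet κ ⊕ B → Prop) :
    ¬ RelEmb r (ord2 (θ := θ)) := by
  rintro ⟨f, hf, -⟩
  exact not_injective_kSet_to_d2 hκ hθ (f ∘ .inl) (hf.comp Sum.inl_injective)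

section Labels

variable {κ : Cardinal} {L : KSet κ → KSet κ → Prop}

lemma exists_inl_of_belowIncomparable_ord1 (x : D1 κ)
    (hx : BelowIncomparable (ord1 L) x) : ∃ α, x = .inl α := by
  obtain ⟨y, z, hxy, hxz, hyz, hzy⟩ := hx
  rcases x with α | p
  · exact ⟨α, rfl⟩
  rcases y with _ | q <;> rcases z with _ | q' <;> simp_all [ord1]
  exact lt_asymm hyz hzy

lemma exists_inl_of_belowIncomparable_ord3 (x : D3 κ)
    (hx : BelowIncomparable (ord3 L) x) : ∃ α, x = .inl α := by
  obtain ⟨y, z, hxy, hxz, hyz, hzy⟩ := hx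
  rcases x with α | _ | p
  · exact ⟨α, rfl⟩
  all_goals rcases y with _ | _ | q <;> rcases z with _ | _ | q' <;> simp_all [ord3]
  exact lt_asymm hyz hzy

variable [IsTrans (KSet κ) L] [Std.Antisymm L]

lemma exists_two_pos_above (h0 : (0 : Ordinal) < κ.ord)
    (hnomax : ∀ x, ∃ y, x ≠ y ∧ L x y) (α : KSet κ) :
    ∃ β β' : KSet κ, β ≠ β' ∧ 0 < β.1 ∧ 0 < β'.1 ∧ L α β ∧ L α β' := by
  obtain ⟨β, β', hne, hβ, hβ', hαβ, hαβ'⟩ := exists_two_above_ne hnomax α ⟨0, h0⟩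
  exact ⟨β, β', hne, pos_iff_ne_zero.2 fun h => hβ (Subtype.ext h),
    pos_iff_ne_zero.2 fun h => hβ' (Subtype.ext h), hαβ, hαβ'⟩

lemma belowIncomparable_ord1_inl (h0 : (0 : Ordinal) < κ.ord)
    (hnomax : ∀ x, ∃ y, x ≠ y ∧ L x y) (α : KSet κ) : BelowIncomparable (ord1 L) (.inl α) := by
  obtain ⟨β, β', hne, hβ, hβ', hαβ, hαβ'⟩ := exists_two_pos_above h0 hnomax α
  refine ⟨.inr ⟨(β, ⟨0, h0⟩), hβ, hβ⟩, .inr ⟨(β', ⟨0, h0⟩), hβ', hβ'⟩, hαβ, hαβ', ?_, ?_⟩ <;>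
    simp [ord1, hne, hne.symm]

lemma belowIncomparable_ord3_inl (h0 : (0 : Ordinal) < κ.ord)
    (hnomax : ∀ x, ∃ y, x ≠ y ∧ L x y) (α : KSet κ) : BelowIncomparable (ord3 L) (.inl α) := by
  obtain ⟨β, β', hne, hβ, hβ', hαβ, hαβ'⟩ := exists_two_pos_above h0 hnomax α
  refine ⟨.inr (.inr ⟨(β, ⟨0, h0⟩), hβ, hβ⟩), .inr (.inr ⟨(β', ⟨0, h0⟩), hβ', hβ'⟩), hαβ, hαβ',
    ?_, ?_⟩ <;> simp [ord3, hne, hne.symm]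

end Labels

theorem stmt5_general (κ : Cardinal) (hunc : Cardinal.aleph0 < κ)
    (h0 : (0 : Ordinal) < κ.ord)
    (U : Type*) (L : KSet κ → (KSet κ → KSet κ → Prop)) (Ls : U → (KSet κ → KSet κ → Prop))
    (hL : ∀ γ, IsLinearOrder (KSet κ) (L γ)) (hLs : ∀ u, IsLinearOrder (KSet κ) (Ls u))
    (hLnomax : ∀ γ x, ∃ y, x ≠ y ∧ L γ x y) (hLsnomax : ∀ u x, ∃ y, x ≠ y ∧ Ls u x y)
    (hLsLs : ∀ u u', u ≠ u' → ¬ RelEmb (Ls u) (Ls u'))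
    (hLLs : ∀ γ u, ¬ RelEmb (L γ) (Ls u))
    (hLsL : ∀ u γ, ¬ RelEmb (Ls u) (L γ)) :
    ((∀ γ (θ : Ordinal), θ < κ.ord →
        ¬ RelEmb (ord1 (L γ)) (ord2 (θ := θ)) ∧ ¬ RelEmb (ord2 (θ := θ)) (ord1 (L γ))) ∧
      (∀ γ u, ¬ RelEmb (ord1 (L γ)) (ord3 (Ls u)) ∧ ¬ RelEmb (ord3 (Ls u)) (ord1 (L γ))) ∧
      (∀ (θ : Ordinal), θ < κ.ord → ∀ u,
        ¬ RelEmb (ord2 (θ := θ)) (ord3 (Ls u)) ∧ ¬ RelEmb (ord3 (Ls u)) (ord2 (θ := θ)))) ∧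
    (∀ u v : U, u ≠ v → ¬ RelEmb (ord3 (Ls u)) (ord3 (Ls v))) := by
  have inl1 γ := belowIncomparable_ord1_inl h0 (hLnomax γ)
  have inl3 u := belowIncomparable_ord3_inl h0 (hLsnomax u)
  refine ⟨⟨fun γ θ hθ => ⟨?_, ?_⟩, fun γ u => ⟨?_, ?_⟩, fun θ hθ u => ⟨?_, ?_⟩⟩, ?_⟩
  · exact not_relEmb_ord2_of_sum hunc hθ _
  · exact not_relEmb_ord2 (exists_inl_of_belowIncomparable_ord1) (total_of (L γ))
  · exact fun h => hLLs γ u (h.restrict_inl (inl1 γ) exists_inl_of_belowIncomparable_ord3)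
  · exact fun h => hLsL u γ (h.restrict_inl (inl3 u) exists_inl_of_belowIncomparable_ord1)
  · exact not_relEmb_ord2 (exists_inl_of_belowIncomparable_ord3) (total_of (Ls u))
  · exact not_relEmb_ord2_of_sum hunc hθ _
  · exact fun u v huv h =>
      hLsLs u v huv (h.restrict_inl (inl3 u) exists_inl_of_belowIncomparable_ord3)

/-- Let `κ` be regular uncountable; fix linear orders `L γ` (`γ < κ`) and `L* u`
(`u ∈ U`) on `κ`, each with minimum `0` and no maximal element, no member of the
family embedding into a different member.  Then (i) labels of different types never
embed into one another, and (ii) for `u ≠ v` the type III label of `u` does not embed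
into the type III label of `v`. -/
theorem stmt5 (κ : Cardinal) (hreg : κ.IsRegular) (hunc : Cardinal.aleph0 < κ)
    (h0 : (0 : Ordinal) < κ.ord)
    (U : Type*) (L : KSet κ → (KSet κ → KSet κ → Prop)) (Ls : U → (KSet κ → KSet κ → Prop))
    (hL : ∀ γ, IsLinearOrder (KSet κ) (L γ)) (hLs : ∀ u, IsLinearOrder (KSet κ) (Ls u))
    (hLmin : ∀ γ x, L γ ⟨0, h0⟩ x) (hLsmin : ∀ u x, Ls u ⟨0, h0⟩ x)
    (hLnomax : ∀ γ x, ∃ y, x ≠ y ∧ L γ x y) (hLsnomax : ∀ u x, ∃ y, x ≠ y ∧ Ls u x y)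
    (hLL : ∀ γ γ', γ ≠ γ' → ¬ RelEmb (L γ) (L γ'))
    (hLsLs : ∀ u u', u ≠ u' → ¬ RelEmb (Ls u) (Ls u'))
    (hLLs : ∀ γ u, ¬ RelEmb (L γ) (Ls u))
    (hLsL : ∀ u γ, ¬ RelEmb (Ls u) (L γ)) :
    ((∀ γ (θ : Ordinal), θ < κ.ord →
        ¬ RelEmb (ord1 (L γ)) (ord2 (θ := θ)) ∧ ¬ RelEmb (ord2 (θ := θ)) (ord1 (L γ))) ∧
      (∀ γ u, ¬ RelEmb (ord1 (L γ)) (ord3 (Ls u)) ∧ ¬ RelEmb (ord3 (Ls u)) (ord1 (L γ))) ∧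
      (∀ (θ : Ordinal), θ < κ.ord → ∀ u,
        ¬ RelEmb (ord2 (θ := θ)) (ord3 (Ls u)) ∧ ¬ RelEmb (ord3 (Ls u)) (ord2 (θ := θ)))) ∧
    (∀ u v : U, u ≠ v → ¬ RelEmb (ord3 (Ls u)) (ord3 (Ls v))) :=
  stmt5_general κ hunc h0 U L Ls hL hLs hLnomax hLsnomax hLsLs hLLs hLsL
end

section
/- Let X be a generalized tree, a ∈ X, and (a_z)_{z∈ℤ}, (b_z)_{z∈ℤ} families of elements of X such that Stem(a,(a_z)) and Stem(a,(b_z)) both hold. Then there is k ∈ ℤ such that a_z = b_{z+k} for every z ∈ ℤ; in particular {a_z : z ∈ ℤ} = {b_z : z ∈ ℤ}. -/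
/-!
Each stem is an order-embedded copy of `ℤ` lying inside the set of roots over `a`. If some
`f z` were not in the range of `g`, it would lie above all of `g`; then every `g w`, being a root
not above `f z`, would be some `f (ψ w)` with `ψ w < z`, and `ψ : ℤ → ℤ` would be strictly
monotone and bounded above, which is impossible. So both stems have the same range, and `f`
factors through `g` by an order automorphism of `ℤ`, which must be a translation.
-/

/-- `X` is a generalized tree: the set of strict predecessors of every element is
linearly ordered. -/
def IsGenTree (X : Type*) [PartialOrder X] : Prop :=
  ∀ x y z : X, y < x → z < x → y ≤ z ∨ z ≤ y

/-- `a` is well-founded: the restriction of `<` to its set of strict predecessors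
is a well-founded relation. -/
def WFElem {X : Type*} [PartialOrder X] (a : X) : Prop :=
  (Set.Iio a).WellFoundedOn (· < ·)

/-- `Root a b`: `a` is well-founded, `b` is not, `a ≤ b`, and no well-founded `c`
satisfies `a < c ≤ b`. -/
def Root {X : Type*} [PartialOrder X] (a b : X) : Prop :=
  WFElem a ∧ ¬ WFElem b ∧ a ≤ b ∧ ¬ ∃ c : X, a < c ∧ c ≤ b ∧ WFElem c

/-- `Stem a f`: the family `f : ℤ → X` is injective, order-isomorphic to `ℤ`,
consists of roots over `a`, and every root over `a` is either in the family or above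
all of it. -/
def Stem {X : Type*} [PartialOrder X] (a : X) (f : ℤ → X) : Prop :=
  Function.Injective f ∧ (∀ z z' : ℤ, f z ≤ f z' ↔ z ≤ z') ∧
    (∀ z : ℤ, Root a (f z)) ∧
    ∀ y : X, Root a y → (∃ z : ℤ, y = f z) ∨ ∀ z : ℤ, f z < y

namespace Int

theorem not_bddAbove_range_of_strictMono {ψ : ℤ → ℤ} (hψ : StrictMono ψ) :
    ¬ BddAbove (Set.range ψ) := by
  rintro ⟨b, hb⟩
  have hgrowth : ∀ n : ℕ, ψ 0 + n ≤ ψ n := by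
    intro n
    induction n with
    | zero => simp
    | succ n ih =>
      have := hψ (lt_add_one (n : ℤ))
      push_cast
      omega
  have h₁ := hgrowth (b - ψ 0 + 1).toNat
  have h₂ := hb ⟨(b - ψ 0 + 1).toNat, rfl⟩
  omega

theorem eq_add_of_strictMono_of_surjective {φ : ℤ → ℤ} (hmono : StrictMono φ)
    (hsurj : Function.Surjective φ) (z : ℤ) : φ z = z + φ 0 := by
  have hsucc : ∀ z, φ (z + 1) = φ z + 1 := fun z => by
    simpa [Order.succ_eq_add_one] using (hmono.orderIsoOfSurjective φ hsurj).map_succ z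
  induction z using Int.induction_on with
  | zero => simp
  | succ n ih => rw [hsucc, ih]; ring
  | pred n ih =>
    have := hsucc (-(n : ℤ) - 1)
    rw [sub_add_cancel] at this
    omega

end Int

namespace Stem

variable {X : Type*} [PartialOrder X] {a : X} {f g : ℤ → X}

theorem lt_iff (hf : Stem a f) {z z' : ℤ} : f z < f z' ↔ z < z' :=
  (OrderEmbedding.ofMapLEIff f hf.2.1).lt_iff_lt

theorem range_subset (hf : Stem a f) (hg : Stem a g) : Set.range f ⊆ Set.range g := by
  rintro _ ⟨z, rfl⟩
  by_contra hz
  have hbelow : ∀ w, g w < f z :=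
    (hg.2.2.2 (f z) (hf.2.2.1 z)).resolve_left fun ⟨w, hw⟩ => hz ⟨w, hw.symm⟩
  have hin : ∀ w, ∃ y, g w = f y := fun w =>
    (hf.2.2.2 (g w) (hg.2.2.1 w)).resolve_right fun h => (h z).not_gt (hbelow w)
  choose ψ hψ using hin
  have hmono : StrictMono ψ := fun w w' h => by
    rw [← hf.lt_iff, ← hψ, ← hψ]
    exact hg.lt_iff.2 h
  refine Int.not_bddAbove_range_of_strictMono hmono ⟨z, ?_⟩
  rintro _ ⟨w, rfl⟩
  exact (hf.lt_iff.1 (hψ w ▸ hbelow w)).le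

theorem exists_shift (hf : Stem a f) (hg : Stem a g) : ∃ k : ℤ, ∀ z, f z = g (z + k) := by
  choose φ hφ using fun z => hf.range_subset hg ⟨z, rfl⟩
  have hmono : StrictMono φ := fun z z' h => by
    rw [← hg.lt_iff, hφ, hφ]
    exact hf.lt_iff.2 h
  have hsurj : Function.Surjective φ := fun w => by
    obtain ⟨z, hz⟩ := hg.range_subset hf ⟨w, rfl⟩
    exact ⟨z, hg.1 (by rw [hφ, hz])⟩
  exact ⟨φ 0, fun z => by rw [← hφ, Int.eq_add_of_strictMono_of_surjective hmono hsurj]⟩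

end Stem

theorem stmt8_general {X : Type*} [PartialOrder X] (a : X)
    (f g : ℤ → X) (hf : Stem a f) (hg : Stem a g) :
    (∃ k : ℤ, ∀ z : ℤ, f z = g (z + k)) ∧ Set.range f = Set.range g :=
  ⟨hf.exists_shift hg, (hf.range_subset hg).antisymm (hg.range_subset hf)⟩

/-- Two stems over the same point `a` of a generalized tree differ by a shift of `ℤ`;
in particular they have the same range. -/
theorem stmt8 {X : Type*} [PartialOrder X] (htree : IsGenTree X) (a : X)
    (f g : ℤ → X) (hf : Stem a f) (hg : Stem a g) :
    (∃ k : ℤ, ∀ z : ℤ, f z = g (z + k)) ∧ Set.range f = Set.range g :=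
  stmt8_general a f g hf hg
end

section
/- For every simple graph G on an infinite vertex set κ: (a) for every α ∈ κ, the element v_α has order 7 in H(G); (b) for all distinct α, β ∈ κ: if α and β are adjacent in G then v_α · v_β has order 11 in H(G), and if α and β are not adjacent then v_α · v_β has order 13 in H(G). -/
/-- The relator set for Williams' group `H(G)` of a simple graph `G`:
`v_α^7` for every vertex `α`; `(v_α v_β)^11` for adjacent `α, β`;
`(v_α v_β)^13` for distinct non-adjacent `α, β`. -/
def grels {V : Type*} (G : SimpleGraph V) : Set (FreeGroup V) :=
  {r | ∃ α : V, r = FreeGroup.of α ^ 7} ∪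
    {r | ∃ α β : V, G.Adj α β ∧ r = (FreeGroup.of α * FreeGroup.of β) ^ 11} ∪
    {r | ∃ α β : V, α ≠ β ∧ ¬ G.Adj α β ∧ r = (FreeGroup.of α * FreeGroup.of β) ^ 13}

/-- Williams' group `H(G)`. -/
abbrev HGrp {V : Type*} (G : SimpleGraph V) := PresentedGroup (grels G)

/-- The generator `v_α` of `H(G)`. -/
def vg {V : Type*} (G : SimpleGraph V) (α : V) : HGrp G := PresentedGroup.of α

/-- `x` and `y` are of the same type: both have order 7, and either both products
`x*y`, `y*x` have order 11, or both have order 13. -/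
def SameT {Γ : Type*} [Group Γ] (x y : Γ) : Prop :=
  orderOf x = 7 ∧ orderOf y = 7 ∧
    ((orderOf (x * y) = 11 ∧ orderOf (y * x) = 11) ∨
      (orderOf (x * y) = 13 ∧ orderOf (y * x) = 13))

/-- `gen x` : there is some `y` of the same type as `x`. -/
def genT {Γ : Type*} [Group Γ] (x : Γ) : Prop := ∃ y, SameT x y

/-!
Each relator has prime exponent, so it suffices to show that `v_α` and `v_α v_β` (`α ≠ β`) are
nontrivial, which we do by a representation of `H(G)` on `V →₀ 𝔽₂₀₀₃²`: `v_γ` acts as `1 + ι_γ θ_γ`,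
where `ι_γ` inserts a vector into block `γ` and `θ_γ` reads block `μ` through a `2 × 2` matrix that
depends only on whether `μ = γ`, `μ ~ γ`, or neither. By the push-through identity
`(1 + u z) ^ e = 1 + u (∑ i < e, (1 + z u) ^ i) z`, each relation reduces to the vanishing of a
geometric sum of one explicit `2 × 2` or `4 × 4` matrix, which is a finite computation.
-/

namespace LinearMap

section

variable {R M N : Type*} [Semiring R] [AddCommMonoid M] [Module R M] [AddCommMonoid N]
  [Module R N]

theorem one_add_comp_pow (u : N →ₗ[R] M) (z : M →ₗ[R] N) (e : ℕ) :
    (1 + u ∘ₗ z) ^ e = 1 + u ∘ₗ (∑ i ∈ Finset.range e, (1 + z ∘ₗ u) ^ i) ∘ₗ z := by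
  induction e with
  | zero => simp
  | succ e ih =>
    rw [pow_succ', ih, geom_sum_succ]
    ext m
    simp only [Module.End.mul_apply, add_apply, comp_apply, Module.End.one_apply, map_add]
    abel

theorem one_add_comp_pow_eq_one (u : N →ₗ[R] M) (z : M →ₗ[R] N) {e : ℕ}
    (h : ∑ i ∈ Finset.range e, (1 + z ∘ₗ u) ^ i = 0) : (1 + u ∘ₗ z) ^ e = 1 := by
  rw [one_add_comp_pow, h, zero_comp, comp_zero, add_zero]

theorem one_add_comp_mul_one_add_comp {N₁ N₂ : Type*} [AddCommMonoid N₁] [Module R N₁]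
    [AddCommMonoid N₂] [Module R N₂] (u₁ : N₁ →ₗ[R] M) (z₁ : M →ₗ[R] N₁) (u₂ : N₂ →ₗ[R] M)
    (z₂ : M →ₗ[R] N₂) :
    (1 + u₁ ∘ₗ z₁) * (1 + u₂ ∘ₗ z₂) =
      1 + u₁.coprod u₂ ∘ₗ (z₁ + z₁ ∘ₗ u₂ ∘ₗ z₂).prod z₂ := by
  ext m
  simp only [Module.End.mul_apply, add_apply, Module.End.one_apply, comp_apply, map_add,
    coprod_comp_prod]
  abel

end

theorem one_add_comp_pow_eq_one_of_matrix {ι R M : Type*} [Fintype ι] [DecidableEq ι]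
    [CommSemiring R] [AddCommMonoid M] [Module R M] (u : (ι → R) →ₗ[R] M)
    (z : M →ₗ[R] ι → R) (A : Matrix ι ι R) (hzu : z ∘ₗ u = A.toLin') {e : ℕ}
    (hA : ∑ i ∈ Finset.range e, (1 + A) ^ i = 0) : (1 + u ∘ₗ z) ^ e = 1 := by
  apply one_add_comp_pow_eq_one
  rw [hzu, show A.toLin' = Matrix.toLinAlgEquiv' A from rfl,
    ← map_one (Matrix.toLinAlgEquiv' (R := R) (n := ι)), ← map_add]
  simp_rw [← map_pow]
  rw [← map_sum, hA, map_zero]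

end LinearMap

namespace Williams

open LinearMap Matrix

abbrev K : Type := ZMod 2003

/- `2002 = 2 * 7 * 11 * 13`, so `𝔽₂₀₀₃` has primitive 7th, 11th and 13th roots of unity.
A sum `∑ i < e, M ^ i` vanishes iff `M ^ e = 1` and `1` is not an eigenvalue of `M`: the matrices
below are chosen so that this holds for `Smat` with `e = 7` and for `1 + pairMatrix B` with
`e = 11, 13`. -/
def Smat : Matrix (Fin 2) (Fin 2) K := !![0, -1; 1, 1848]
def Amat : Matrix (Fin 2) (Fin 2) K := Smat - 1
def Badj : Matrix (Fin 2) (Fin 2) K := !![1967, 1573; 2002, 36]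
def Bnon : Matrix (Fin 2) (Fin 2) K := !![1368, 277; 2002, 635]

/-- When `coef G γ δ = coef G δ γ = B`, `1 + pairMatrix B` is the matrix of `gen G γ * gen G δ`
on the blocks at `γ` and `δ`. -/
def pairMatrix (B : Matrix (Fin 2) (Fin 2) K) : Matrix (Fin 2 ⊕ Fin 2) (Fin 2 ⊕ Fin 2) K :=
  Matrix.fromBlocks (Amat + B * B) (B + B * Amat) B Amat

theorem geom_sum_one_add_Amat : ∑ i ∈ Finset.range 7, (1 + Amat) ^ i = 0 := by decide

theorem geom_sum_pairMatrix_Badj : ∑ i ∈ Finset.range 11, (1 + pairMatrix Badj) ^ i = 0 := by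
  decide

theorem geom_sum_pairMatrix_Bnon : ∑ i ∈ Finset.range 13, (1 + pairMatrix Bnon) ^ i = 0 := by
  decide

theorem Smat_mulVec_ne : Smat *ᵥ ![1, 0] ≠ ![1, 0] := by decide

variable {V : Type*} (G : SimpleGraph V)

abbrev Space (V : Type*) : Type _ := V →₀ Fin 2 → K

open scoped Classical in
noncomputable def coef (γ μ : V) : Matrix (Fin 2) (Fin 2) K :=
  if γ = μ then Amat else if G.Adj γ μ then Badj else Bnon

theorem coef_self (γ : V) : coef G γ γ = Amat := if_pos rfl

theorem coef_of_adj {γ μ : V} (h : G.Adj γ μ) : coef G γ μ = Badj := by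
  rw [coef, if_neg h.ne, if_pos h]

theorem coef_of_not_adj {γ μ : V} (hne : γ ≠ μ) (h : ¬ G.Adj γ μ) : coef G γ μ = Bnon := by
  rw [coef, if_neg hne, if_neg h]

noncomputable def read (γ : V) : Space V →ₗ[K] Fin 2 → K :=
  Finsupp.lsum K fun μ => (coef G γ μ).toLin'

@[simp]
theorem read_single (γ μ : V) (w : Fin 2 → K) :
    read G γ (Finsupp.single μ w) = coef G γ μ *ᵥ w := by
  simp [read]

noncomputable def gen (γ : V) : Module.End K (Space V) := 1 + Finsupp.lsingle γ ∘ₗ read G γ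

theorem gen_apply (γ : V) (m : Space V) : gen G γ m = m + Finsupp.single γ (read G γ m) := rfl

theorem read_comp_lsingle (γ μ : V) :
    read G γ ∘ₗ Finsupp.lsingle μ = (coef G γ μ).toLin' := by
  ext; simp

theorem gen_pow_seven (γ : V) : gen G γ ^ 7 = 1 :=
  one_add_comp_pow_eq_one_of_matrix _ _ Amat (by rw [read_comp_lsingle, coef_self])
    geom_sum_one_add_Amat

theorem gen_mul_gen_pow_eq_one {γ δ : V} {B : Matrix (Fin 2) (Fin 2) K}
    (hγδ : coef G γ δ = B) (hδγ : coef G δ γ = B) {e : ℕ}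
    (hB : ∑ i ∈ Finset.range e, (1 + pairMatrix B) ^ i = 0) :
    (gen G γ * gen G δ) ^ e = 1 := by
  let σ := LinearEquiv.sumArrowLequivProdArrow (Fin 2) (Fin 2) K K
  let u := (Finsupp.lsingle γ).coprod (Finsupp.lsingle δ) ∘ₗ σ.toLinearMap
  let z := σ.symm.toLinearMap ∘ₗ (read G γ + B.toLin' ∘ₗ read G δ).prod (read G δ)
  have hgen : gen G γ * gen G δ = 1 + u ∘ₗ z := by
    rw [gen, gen, one_add_comp_mul_one_add_comp, ← comp_assoc, read_comp_lsingle, hγδ]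
    refine LinearMap.ext fun m => ?_
    simp [u, z]
  have hzu : z ∘ₗ u = (pairMatrix B).toLin' := by
    refine LinearMap.ext fun w => funext fun s => ?_
    rcases s with j | j <;> fin_cases j <;>
      simp [u, z, σ, pairMatrix, hγδ, hδγ, coef_self, Matrix.mulVec, dotProduct,
        Fin.sum_univ_two, Matrix.mul_apply] <;> ring
  rw [hgen]
  exact one_add_comp_pow_eq_one_of_matrix u z _ hzu hB

theorem gen_single_self (γ : V) (w : Fin 2 → K) :
    gen G γ (Finsupp.single γ w) = Finsupp.single γ (Smat *ᵥ w) := by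
  rw [gen_apply, read_single, coef_self, ← Finsupp.single_add, Amat, sub_mulVec, one_mulVec,
    add_sub_cancel]

theorem gen_ne_one (γ : V) : gen G γ ≠ 1 := by
  intro h
  have h' := congrArg (· (Finsupp.single γ ![1, 0])) h
  simp only [gen_single_self, Module.End.one_apply] at h'
  exact Smat_mulVec_ne (Finsupp.single_injective γ h')

theorem gen_mul_gen_ne_one {γ δ : V} (hne : γ ≠ δ) : gen G γ * gen G δ ≠ 1 := by
  intro h
  have h' := congrArg (· (Finsupp.single δ ![1, 0]) δ) h
  rw [Module.End.mul_apply, gen_single_self, gen_apply, Finsupp.add_apply,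
    Finsupp.single_eq_same, Finsupp.single_eq_of_ne hne.symm, add_zero, Module.End.one_apply,
    Finsupp.single_eq_same] at h'
  exact Smat_mulVec_ne h'

noncomputable def genUnit (γ : V) : (Module.End K (Space V))ˣ :=
  Units.ofPowEqOne _ 7 (gen_pow_seven G γ) (by norm_num)

theorem lift_genUnit_grels : ∀ r ∈ grels G, FreeGroup.lift (genUnit G) r = 1 := by
  rintro r ((⟨α, rfl⟩ | ⟨α, β, hadj, rfl⟩) | ⟨α, β, hne, hnadj, rfl⟩) <;>
    refine Units.ext ?_ <;>
    simp only [map_pow, map_mul, FreeGroup.lift_apply_of, Units.val_pow_eq_pow_val,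
      Units.val_mul, Units.val_one, genUnit, Units.val_ofPowEqOne]
  · exact gen_pow_seven G α
  · exact gen_mul_gen_pow_eq_one G (coef_of_adj G hadj) (coef_of_adj G hadj.symm)
      geom_sum_pairMatrix_Badj
  · exact gen_mul_gen_pow_eq_one G (coef_of_not_adj G hne hnadj)
      (coef_of_not_adj G hne.symm fun h => hnadj h.symm) geom_sum_pairMatrix_Bnon

noncomputable def rep : HGrp G →* (Module.End K (Space V))ˣ :=
  PresentedGroup.toGroup (lift_genUnit_grels G)

theorem rep_vg (α : V) : (rep G (vg G α) : Module.End K (Space V)) = gen G α := by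
  rw [rep, vg, PresentedGroup.toGroup.of, genUnit, Units.val_ofPowEqOne]

theorem vg_ne_one (α : V) : vg G α ≠ 1 := fun h =>
  gen_ne_one G α (by rw [← rep_vg, h, map_one, Units.val_one])

theorem vg_mul_vg_ne_one {α β : V} (hne : α ≠ β) : vg G α * vg G β ≠ 1 := fun h =>
  gen_mul_gen_ne_one G hne (by rw [← rep_vg, ← rep_vg, ← Units.val_mul, ← map_mul, h, map_one,
    Units.val_one])

theorem vg_pow_seven (α : V) : vg G α ^ 7 = 1 := by
  rw [vg, PresentedGroup.of, ← map_pow]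
  exact PresentedGroup.one_of_mem (Or.inl (Or.inl ⟨α, rfl⟩))

theorem vg_mul_vg_pow_eleven {α β : V} (hadj : G.Adj α β) : (vg G α * vg G β) ^ 11 = 1 := by
  rw [vg, vg, PresentedGroup.of, PresentedGroup.of, ← map_mul, ← map_pow]
  exact PresentedGroup.one_of_mem (Or.inl (Or.inr ⟨α, β, hadj, rfl⟩))

theorem vg_mul_vg_pow_thirteen {α β : V} (hne : α ≠ β) (hnadj : ¬ G.Adj α β) :
    (vg G α * vg G β) ^ 13 = 1 := by
  rw [vg, vg, PresentedGroup.of, PresentedGroup.of, ← map_mul, ← map_pow]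
  exact PresentedGroup.one_of_mem (Or.inr ⟨α, β, hne, hnadj, rfl⟩)

end Williams

open Williams in
theorem stmt10_general {V : Type*} (G : SimpleGraph V) :
    (∀ α : V, orderOf (vg G α) = 7) ∧
      (∀ α β : V, α ≠ β →
        (G.Adj α β → orderOf (vg G α * vg G β) = 11) ∧
        (¬ G.Adj α β → orderOf (vg G α * vg G β) = 13)) := by
  have : Fact (Nat.Prime 7) := ⟨by norm_num⟩
  have : Fact (Nat.Prime 11) := ⟨by norm_num⟩
  have : Fact (Nat.Prime 13) := ⟨by norm_num⟩
  refine ⟨fun α => orderOf_eq_prime (vg_pow_seven G α) (vg_ne_one G α), fun α β hne => ⟨?_, ?_⟩⟩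
  · exact fun hadj => orderOf_eq_prime (vg_mul_vg_pow_eleven G hadj) (vg_mul_vg_ne_one G hne)
  · exact fun hnadj =>
      orderOf_eq_prime (vg_mul_vg_pow_thirteen G hne hnadj) (vg_mul_vg_ne_one G hne)

/-- (a) each `v_α` has order 7 in `H(G)`; (b) for distinct `α, β`: if adjacent then
`v_α * v_β` has order 11, and if non-adjacent then it has order 13. -/
theorem stmt10 {V : Type*} [Infinite V] (G : SimpleGraph V) :
    (∀ α : V, orderOf (vg G α) = 7) ∧
      (∀ α β : V, α ≠ β →
        (G.Adj α β → orderOf (vg G α * vg G β) = 11) ∧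
        (¬ G.Adj α β → orderOf (vg G α * vg G β) = 13)) :=
  stmt10_general G
end

section
/- Let G be a simple graph on an infinite vertex set κ, let α, β ∈ κ, k, ℓ ∈ {1,−1}, and g, h ∈ H(G). If g · v_α^k · g⁻¹ = h · v_β^ℓ · h⁻¹ in H(G), then α = β. -/
/-!  Auxiliary development: an explicit linear representation of `H(G)` over `ZMod 2003`
(`2002 = 2·7·11·13`), in which `v_β` has eigenvalues `{ζ², ζ⁻²}` and all other
generators have eigenvalues `{ζ, ζ⁻¹}` for `ζ` of order `7`.  Interaction coefficients
between generators were chosen so that all relators are satisfied. -/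

namespace WilliamsAux

noncomputable section

abbrev K : Type := ZMod 2003

instance : Fact (Nat.Prime 2003) := ⟨by norm_num⟩

/-- The representation space: finitely supported functions on `V × Fin 2`. -/
abbrev WV (V : Type*) := (V × Fin 2) →₀ K

variable {V : Type*}

/-- Basis vectors. -/
def bv (γ : V) (i : Fin 2) : WV V := Finsupp.single (γ, i) 1

lemma bv_ne_zero (γ : V) (i : Fin 2) : bv γ i ≠ 0 := fun h =>
  one_ne_zero (Finsupp.single_eq_zero.mp h)

/-- Identity plus a rank-2 perturbation supported on `bv γ 0, bv γ 1`. -/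
def rk2 (γ : V) (c : Fin 2 → K) (F : Fin 2 → (WV V →ₗ[K] K)) : Module.End K (WV V) :=
  1 + c 0 • ((F 0).smulRight (bv γ 0)) + c 1 • ((F 1).smulRight (bv γ 1))

lemma rk2_apply (γ : V) (c : Fin 2 → K) (F : Fin 2 → (WV V →ₗ[K] K)) (w : WV V) :
    rk2 γ c F w = w + (c 0 * F 0 w) • bv γ 0 + (c 1 * F 1 w) • bv γ 1 := by
  simp [rk2, LinearMap.smulRight_apply, smul_smul]

/-- The core mechanism: if `z - 1` factors through a finite-dimensional `z`-invariant
piece on which `z` acts by the matrix `A`, and `∑_{i<n} A^i = 0`, then `z^n = 1`. -/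
lemma pow_eq_one_of_factor {M : Type*} [AddCommGroup M] [Module K M] {m n : ℕ}
    (z : Module.End K M) (Ψ : (Fin m → K) →ₗ[K] M) (Θ : M →ₗ[K] (Fin m → K))
    (A : Matrix (Fin m) (Fin m) K)
    (h1 : z = 1 + Ψ ∘ₗ Θ)
    (h2 : z ∘ₗ Ψ = Ψ ∘ₗ Matrix.toLin' A)
    (h3 : (∑ i ∈ Finset.range n, A ^ i) = 0) : z ^ n = 1 := by
  have hpow : ∀ i : ℕ, (z ^ i) ∘ₗ Ψ = Ψ ∘ₗ Matrix.toLin' (A ^ i) := by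
    intro i
    induction i with
    | zero => simp [Matrix.toLin'_one, Module.End.one_eq_id]
    | succ i ih =>
      rw [pow_succ', pow_succ', Matrix.toLin'_mul]
      calc (z * z ^ i) ∘ₗ Ψ = z ∘ₗ ((z ^ i) ∘ₗ Ψ) := by
            rw [Module.End.mul_eq_comp, LinearMap.comp_assoc]
        _ = (z ∘ₗ Ψ) ∘ₗ Matrix.toLin' (A ^ i) := by rw [ih, LinearMap.comp_assoc]
        _ = Ψ ∘ₗ (Matrix.toLin' A ∘ₗ Matrix.toLin' (A ^ i)) := by
            rw [h2, LinearMap.comp_assoc]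
  have key : z ^ n - 1 = 0 := by
    have hgeom := geom_sum_mul z n
    have hz1 : z - 1 = Ψ ∘ₗ Θ := by rw [h1]; abel
    rw [← hgeom, hz1]
    apply LinearMap.ext
    intro w
    have : (∑ i ∈ Finset.range n, z ^ i) (Ψ (Θ w)) = 0 := by
      rw [LinearMap.sum_apply]
      have : ∀ i ∈ Finset.range n, (z ^ i) (Ψ (Θ w)) =
          Ψ (Matrix.toLin' (A ^ i) (Θ w)) := by
        intro i _
        have h := hpow i
        calc (z ^ i) (Ψ (Θ w)) = ((z ^ i) ∘ₗ Ψ) (Θ w) := rfl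
          _ = (Ψ ∘ₗ Matrix.toLin' (A ^ i)) (Θ w) := by rw [h]
          _ = Ψ (Matrix.toLin' (A ^ i) (Θ w)) := rfl
      rw [Finset.sum_congr rfl this, ← map_sum]
      have : (∑ i ∈ Finset.range n, Matrix.toLin' (A ^ i) (Θ w)) =
          Matrix.toLin' (∑ i ∈ Finset.range n, A ^ i) (Θ w) := by
        rw [map_sum (Matrix.toLin') _ (Finset.range n)]
        simp [LinearMap.sum_apply]
      rw [this, h3]
      simp
    simpa [Module.End.mul_eq_comp] using this
  have := sub_eq_zero.mp key
  exact this

/-! ### The `Ψ`/`Θ` maps -/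

def psi2 (a b : WV V) : (Fin 2 → K) →ₗ[K] WV V :=
  (LinearMap.proj 0).smulRight a + (LinearMap.proj 1).smulRight b

lemma psi2_apply (a b : WV V) (v : Fin 2 → K) : psi2 a b v = v 0 • a + v 1 • b := by
  simp [psi2]

def theta2 (f0 f1 : WV V →ₗ[K] K) : WV V →ₗ[K] (Fin 2 → K) :=
  LinearMap.pi (fun i => ![f0, f1] i)

lemma theta2_apply (f0 f1 : WV V →ₗ[K] K) (w : WV V) (i : Fin 2) :
    theta2 f0 f1 w i = ![f0, f1] i w := rfl

def psi4 (a b c d : WV V) : (Fin 4 → K) →ₗ[K] WV V :=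
  (LinearMap.proj 0).smulRight a + (LinearMap.proj 1).smulRight b +
    (LinearMap.proj 2).smulRight c + (LinearMap.proj 3).smulRight d

lemma psi4_apply (a b c d : WV V) (v : Fin 4 → K) :
    psi4 a b c d v = v 0 • a + v 1 • b + v 2 • c + v 3 • d := by
  simp [psi4]

def theta4 (f0 f1 f2 f3 : WV V →ₗ[K] K) : WV V →ₗ[K] (Fin 4 → K) :=
  LinearMap.pi (fun i => ![f0, f1, f2, f3] i)

lemma theta4_apply (f0 f1 f2 f3 : WV V →ₗ[K] K) (w : WV V) (i : Fin 4) :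
    theta4 f0 f1 f2 f3 w i = ![f0, f1, f2, f3] i w := rfl

/-! ### Abstract single-generator and pair relations -/

def selfA (c : Fin 2 → K) : Matrix (Fin 2) (Fin 2) K := !![1 + c 0, 0; 0, 1 + c 1]

lemma self_rel (γ : V) (n : ℕ) (c : Fin 2 → K) (F : Fin 2 → (WV V →ₗ[K] K))
    (hFs : ∀ i j, F i (bv γ j) = if i = j then 1 else 0)
    (h3 : (∑ i ∈ Finset.range n, (selfA c) ^ i) = 0) : rk2 γ c F ^ n = 1 := by
  apply pow_eq_one_of_factor (m := 2) _ (psi2 (bv γ 0) (bv γ 1))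
    (theta2 (c 0 • F 0) (c 1 • F 1)) (selfA c) ?_ ?_ h3
  · apply LinearMap.ext; intro w
    simp only [rk2_apply, LinearMap.add_apply, Module.End.one_apply, LinearMap.comp_apply,
      psi2_apply, theta2_apply, Matrix.cons_val_zero, Matrix.cons_val_one, Matrix.head_cons,
      LinearMap.smul_apply, smul_eq_mul]
    module
  · have hs0 : rk2 γ c F (bv γ 0) = (1 + c 0) • bv γ 0 := by
      rw [rk2_apply, hFs 0 0, hFs 1 0]; norm_num; module
    have hs1 : rk2 γ c F (bv γ 1) = (1 + c 1) • bv γ 1 := by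
      rw [rk2_apply, hFs 0 1, hFs 1 1]; norm_num; module
    apply LinearMap.ext; intro v
    simp only [LinearMap.comp_apply, psi2_apply, map_add, map_smul, hs0, hs1,
      Matrix.toLin'_apply, Matrix.mulVec, dotProduct, Fin.sum_univ_two,
      selfA, Matrix.of_apply, Matrix.cons_val', Matrix.cons_val_zero, Matrix.cons_val_one,
      Matrix.head_cons, Matrix.head_fin_const, Matrix.empty_val',
      Matrix.cons_val_fin_one]
    module

def pairA (cx cy : Fin 2 → K) (P Q : Fin 2 → Fin 2 → K) : Matrix (Fin 4) (Fin 4) K :=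
  !![1 + cx 0 + cx 0 * P 0 0 * (cy 0 * Q 0 0) + cx 0 * P 0 1 * (cy 1 * Q 1 0),
       cx 0 * P 0 0 * (cy 0 * Q 0 1) + cx 0 * P 0 1 * (cy 1 * Q 1 1),
       cx 0 * P 0 0 * (1 + cy 0), cx 0 * P 0 1 * (1 + cy 1);
     cx 1 * P 1 0 * (cy 0 * Q 0 0) + cx 1 * P 1 1 * (cy 1 * Q 1 0),
       1 + cx 1 + cx 1 * P 1 0 * (cy 0 * Q 0 1) + cx 1 * P 1 1 * (cy 1 * Q 1 1),
       cx 1 * P 1 0 * (1 + cy 0), cx 1 * P 1 1 * (1 + cy 1);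
     cy 0 * Q 0 0, cy 0 * Q 0 1, 1 + cy 0, 0;
     cy 1 * Q 1 0, cy 1 * Q 1 1, 0, 1 + cy 1]

lemma pair_rel (γ δ : V) (n : ℕ)
    (cx cy : Fin 2 → K) (Fx Fy : Fin 2 → (WV V →ₗ[K] K)) (P Q : Fin 2 → Fin 2 → K)
    (hFxs : ∀ i j, Fx i (bv γ j) = if i = j then 1 else 0)
    (hFys : ∀ i j, Fy i (bv δ j) = if i = j then 1 else 0)
    (hFxc : ∀ i j, Fx i (bv δ j) = P i j)
    (hFyc : ∀ i j, Fy i (bv γ j) = Q i j)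
    (h3 : (∑ i ∈ Finset.range n, (pairA cx cy P Q) ^ i) = 0) :
    (rk2 γ cx Fx * rk2 δ cy Fy) ^ n = 1 := by
  set x := rk2 γ cx Fx with hx
  set y := rk2 δ cy Fy with hy
  apply pow_eq_one_of_factor (m := 4) _ (psi4 (bv γ 0) (bv γ 1) (bv δ 0) (bv δ 1))
    (theta4 (cx 0 • (Fx 0 ∘ₗ y)) (cx 1 • (Fx 1 ∘ₗ y)) (cy 0 • Fy 0) (cy 1 • Fy 1))
    (pairA cx cy P Q) ?_ ?_ h3
  · -- z = 1 + Ψ ∘ Θ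
    apply LinearMap.ext; intro w
    have hyw : y w = w + (cy 0 * Fy 0 w) • bv δ 0 + (cy 1 * Fy 1 w) • bv δ 1 :=
      rk2_apply δ cy Fy w
    have hxyw : x (y w) = y w + (cx 0 * Fx 0 (y w)) • bv γ 0 + (cx 1 * Fx 1 (y w)) • bv γ 1 :=
      rk2_apply γ cx Fx (y w)
    simp only [Module.End.mul_apply, LinearMap.add_apply, Module.End.one_apply,
      LinearMap.comp_apply, psi4_apply, theta4_apply, Matrix.cons_val_zero,
      Matrix.cons_val_one, Matrix.head_cons, Matrix.cons_val_two, Matrix.cons_val_three,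
      Matrix.tail_cons, Matrix.head_fin_const, LinearMap.smul_apply, smul_eq_mul]
    rw [hxyw, hyw]
    module
  · -- z ∘ Ψ = Ψ ∘ toLin' A
    have hxg0 : x (bv γ 0) = (1 + cx 0) • bv γ 0 := by
      rw [hx, rk2_apply, hFxs 0 0, hFxs 1 0]; norm_num; module
    have hxg1 : x (bv γ 1) = (1 + cx 1) • bv γ 1 := by
      rw [hx, rk2_apply, hFxs 0 1, hFxs 1 1]; norm_num; module
    have hyd0 : y (bv δ 0) = (1 + cy 0) • bv δ 0 := by
      rw [hy, rk2_apply, hFys 0 0, hFys 1 0]; norm_num; module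
    have hyd1 : y (bv δ 1) = (1 + cy 1) • bv δ 1 := by
      rw [hy, rk2_apply, hFys 0 1, hFys 1 1]; norm_num; module
    have hxd : ∀ j, x (bv δ j) = bv δ j + (cx 0 * P 0 j) • bv γ 0
        + (cx 1 * P 1 j) • bv γ 1 := by
      intro j; rw [hx, rk2_apply, hFxc, hFxc]
    have hyg : ∀ j, y (bv γ j) = bv γ j + (cy 0 * Q 0 j) • bv δ 0
        + (cy 1 * Q 1 j) • bv δ 1 := by
      intro j; rw [hy, rk2_apply, hFyc, hFyc]
    apply LinearMap.ext; intro v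
    simp only [LinearMap.comp_apply, psi4_apply, Module.End.mul_apply, map_add, map_smul,
      hyg, hyd0, hyd1, hxg0, hxg1, hxd, Matrix.toLin'_apply, Matrix.mulVec,
      dotProduct, Fin.sum_univ_four, pairA, Matrix.of_apply, Matrix.cons_val', Matrix.cons_val_zero,
      Matrix.cons_val_one, Matrix.head_cons, Matrix.cons_val_two, Matrix.cons_val_three,
      Matrix.tail_cons, Matrix.head_fin_const, Matrix.empty_val', Matrix.cons_val_fin_one]
    module

/-! ### Numerical interaction tables.

`ζ = 874` has order `7`, with `ζ² = 733`, `ζ⁻¹ = 974`, `ζ⁻² = 1257` in `ZMod 2003`.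
Type-1 generators have `c = (ζ-1, ζ⁻¹-1) = (873, 973)`; the special generator `β` has
`c = (ζ²-1, ζ⁻²-1) = (732, 1256)`.  The tables below were computed so that for each
pair the `4×4` interaction matrix has characteristic polynomial with roots
`{θ, θ⁻¹, θ², θ⁻²}` where `θ` has order `11` (adjacent) or `13` (non-adjacent). -/

def Pt : Bool → Bool → Fin 2 → Fin 2 → K
  | false, true => ![![821, 219], ![1488, 1995]]
  | false, false => ![![597, 1613], ![7, 263]]
  | true, true => ![![334, 1602], ![1868, 1880]]
  | true, false => ![![1511, 182], ![542, 1993]]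

def Qt : Bool → Bool → Fin 2 → Fin 2 → K
  | false, true => ![![491, 491], ![1511, 938]]
  | false, false => ![![491, 491], ![1511, 947]]
  | true, true => ![![1152, 1152], ![850, 1836]]
  | true, false => ![![1152, 1152], ![850, 1871]]

def c1v : Fin 2 → K := ![873, 973]
def c2v : Fin 2 → K := ![732, 1256]

section Graph

open Classical

variable (G : SimpleGraph V) (β : V)

/-- Coefficients of the functionals. -/
def cf (γ : V) (i : Fin 2) : V × Fin 2 → K := fun q =>
  if γ = q.1 then (if i = q.2 then 1 else 0)
  else if q.1 = β then (if G.Adj γ q.1 then Pt true true i q.2 else Pt true false i q.2)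
  else if γ = β then (if G.Adj γ q.1 then Qt true true i q.2 else Qt true false i q.2)
  else if WellOrderingRel γ q.1 then
    (if G.Adj γ q.1 then Pt false true i q.2 else Pt false false i q.2)
  else (if G.Adj γ q.1 then Qt false true i q.2 else Qt false false i q.2)

def Ff (γ : V) (i : Fin 2) : WV V →ₗ[K] K :=
  Finsupp.linearCombination K (cf G β γ i)

lemma Ff_bv (γ δ : V) (i j : Fin 2) : Ff G β γ i (bv δ j) = cf G β γ i (δ, j) := by
  simp [Ff, bv, Finsupp.linearCombination_single]

lemma cf_self (γ : V) (i j : Fin 2) : cf G β γ i (γ, j) = if i = j then 1 else 0 := by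
  simp [cf]

lemma cf_Pβ (γ : V) (hγ : γ ≠ β) (i j : Fin 2) :
    cf G β γ i (β, j) = if G.Adj γ β then Pt true true i j else Pt true false i j := by
  simp [cf, hγ]

lemma cf_Qβ (γ : V) (hγ : γ ≠ β) (i j : Fin 2) :
    cf G β β i (γ, j) = if G.Adj β γ then Qt true true i j else Qt true false i j := by
  have h1 : β ≠ γ := hγ.symm
  simp [cf, h1, hγ]

lemma cf_Pstd (γ δ : V) (hγ : γ ≠ β) (hδ : δ ≠ β) (hne : γ ≠ δ)
    (hwo : WellOrderingRel γ δ) (i j : Fin 2) :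
    cf G β γ i (δ, j) = if G.Adj γ δ then Pt false true i j else Pt false false i j := by
  simp [cf, hne, hδ, hγ, hwo]

lemma cf_Qstd (γ δ : V) (hγ : γ ≠ β) (hδ : δ ≠ β) (hne : γ ≠ δ)
    (hwo : WellOrderingRel γ δ) (i j : Fin 2) :
    cf G β δ i (γ, j) = if G.Adj δ γ then Qt false true i j else Qt false false i j := by
  have h1 : δ ≠ γ := hne.symm
  have h2 : ¬ WellOrderingRel δ γ := asymm hwo
  simp [cf, h1, hγ, hδ, h2]

/-- The generator images. -/
def xm (γ : V) : Module.End K (WV V) :=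
  rk2 γ (if γ = β then c2v else c1v) (Ff G β γ)

lemma c1v0 : c1v 0 = 873 := rfl
lemma c1v1 : c1v 1 = 973 := rfl

lemma xm_pow_seven (γ : V) : xm G β γ ^ 7 = 1 := by
  by_cases hb : γ = β
  · rw [xm, if_pos hb]
    exact self_rel γ 7 c2v (Ff G β γ) (fun i j => by rw [Ff_bv, cf_self]) (by decide)
  · rw [xm, if_neg hb]
    exact self_rel γ 7 c1v (Ff G β γ) (fun i j => by rw [Ff_bv, cf_self]) (by decide)

/-- Oriented pair relation: `γ ≠ β` paired with `β`. -/
lemma pair_pow_beta (γ : V) (hγ : γ ≠ β) :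
    (xm G β γ * xm G β β) ^ (if G.Adj γ β then 11 else 13) = 1 := by
  rw [xm, if_neg hγ, xm, if_pos rfl]
  by_cases hadj : G.Adj γ β
  · rw [if_pos hadj]
    exact pair_rel γ β 11 c1v c2v _ _ (Pt true true) (Qt true true)
      (fun i j => by rw [Ff_bv, cf_self])
      (fun i j => by rw [Ff_bv, cf_self])
      (fun i j => by rw [Ff_bv, cf_Pβ G β γ hγ, if_pos hadj])
      (fun i j => by rw [Ff_bv, cf_Qβ G β γ hγ, if_pos hadj.symm])
      (by decide)
  · rw [if_neg hadj]
    have hadj' : ¬ G.Adj β γ := fun h => hadj h.symm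
    exact pair_rel γ β 13 c1v c2v _ _ (Pt true false) (Qt true false)
      (fun i j => by rw [Ff_bv, cf_self])
      (fun i j => by rw [Ff_bv, cf_self])
      (fun i j => by rw [Ff_bv, cf_Pβ G β γ hγ, if_neg hadj])
      (fun i j => by rw [Ff_bv, cf_Qβ G β γ hγ, if_neg hadj'])
      (by decide)

/-- Oriented pair relation: standard pair (neither is `β`), oriented by a well-order. -/
lemma pair_pow_std (γ δ : V) (hγ : γ ≠ β) (hδ : δ ≠ β) (hne : γ ≠ δ)
    (hwo : WellOrderingRel γ δ) :
    (xm G β γ * xm G β δ) ^ (if G.Adj γ δ then 11 else 13) = 1 := by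
  rw [xm, if_neg hγ, xm, if_neg hδ]
  by_cases hadj : G.Adj γ δ
  · rw [if_pos hadj]
    exact pair_rel γ δ 11 c1v c1v _ _ (Pt false true) (Qt false true)
      (fun i j => by rw [Ff_bv, cf_self])
      (fun i j => by rw [Ff_bv, cf_self])
      (fun i j => by rw [Ff_bv, cf_Pstd G β γ δ hγ hδ hne hwo, if_pos hadj])
      (fun i j => by rw [Ff_bv, cf_Qstd G β γ δ hγ hδ hne hwo, if_pos hadj.symm])
      (by decide)
  · rw [if_neg hadj]
    have hadj' : ¬ G.Adj δ γ := fun h => hadj h.symm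
    exact pair_rel γ δ 13 c1v c1v _ _ (Pt false false) (Qt false false)
      (fun i j => by rw [Ff_bv, cf_self])
      (fun i j => by rw [Ff_bv, cf_self])
      (fun i j => by rw [Ff_bv, cf_Pstd G β γ δ hγ hδ hne hwo, if_neg hadj])
      (fun i j => by rw [Ff_bv, cf_Qstd G β γ δ hγ hδ hne hwo, if_neg hadj'])
      (by decide)

/-- The generator images as units. -/
def um (γ : V) : (Module.End K (WV V))ˣ where
  val := xm G β γ
  inv := xm G β γ ^ 6
  val_inv := by rw [← pow_succ']; exact xm_pow_seven G β γ
  inv_val := by rw [← pow_succ]; exact xm_pow_seven G β γ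

lemma um_pow_seven (γ : V) : (um G β γ) ^ 7 = 1 := by
  rw [← Units.val_eq_one, Units.val_pow_eq_pow_val]
  exact xm_pow_seven G β γ

lemma units_pow_of_val {n : ℕ} (a b : (Module.End K (WV V))ˣ)
    (h : ((a : Module.End K (WV V)) * b) ^ n = 1) : (a * b) ^ n = 1 := by
  rw [← Units.val_eq_one, Units.val_pow_eq_pow_val, Units.val_mul]
  exact h

lemma pow_swap {Γ : Type*} [Group Γ] (a b : Γ) (n : ℕ) (h : (a * b) ^ n = 1) :
    (b * a) ^ n = 1 := by
  have hrw : b * a = a⁻¹ * (a * b) * a⁻¹⁻¹ := by group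
  rw [hrw, conj_pow, h]
  group

lemma nn_symm (γ δ : V) :
    (if G.Adj γ δ then (11:ℕ) else 13) = (if G.Adj δ γ then 11 else 13) := by
  by_cases h : G.Adj γ δ
  · rw [if_pos h, if_pos h.symm]
  · rw [if_neg h, if_neg (fun hh => h hh.symm)]

/-- All pair relations hold in the units group. -/
lemma um_pair (γ δ : V) (hne : γ ≠ δ) :
    ((um G β γ) * (um G β δ)) ^ (if G.Adj γ δ then 11 else 13) = 1 := by
  by_cases hδ : δ = β
  · subst hδ
    exact units_pow_of_val _ _ (pair_pow_beta G δ γ hne)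
  · by_cases hγ : γ = β
    · subst hγ
      rw [nn_symm]
      exact pow_swap _ _ _
        (units_pow_of_val _ _ (pair_pow_beta G γ δ hδ))
    · rcases trichotomous_of WellOrderingRel γ δ with hwo | heq | hwo
      · exact units_pow_of_val _ _ (pair_pow_std G β γ δ hγ hδ hne hwo)
      · exact absurd heq hne
      · rw [nn_symm]
        exact pow_swap _ _ _
          (units_pow_of_val _ _ (pair_pow_std G β δ γ hδ hγ hne.symm hwo))

/-- All relators of `H(G)` are satisfied. -/
lemma lift_rels : ∀ r ∈ grels G, FreeGroup.lift (fun γ => um G β γ) r = 1 := by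
  intro r hr
  simp only [grels, Set.mem_union, Set.mem_setOf_eq] at hr
  rcases hr with (⟨γ, rfl⟩ | ⟨γ, δ, hadj, rfl⟩) | ⟨γ, δ, hne, hnadj, rfl⟩
  · rw [map_pow, FreeGroup.lift_apply_of]
    exact um_pow_seven G β γ
  · rw [map_pow, map_mul, FreeGroup.lift_apply_of, FreeGroup.lift_apply_of]
    have := um_pair G β γ δ (G.ne_of_adj hadj)
    rwa [if_pos hadj] at this
  · rw [map_pow, map_mul, FreeGroup.lift_apply_of, FreeGroup.lift_apply_of]
    have := um_pair G β γ δ hne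
    rwa [if_neg hnadj] at this

/-! ### Eigenvalue analysis -/

lemma xm_eig0 (γ : V) (hγ : γ ≠ β) : xm G β γ (bv γ 0) = (874 : K) • bv γ 0 := by
  rw [xm, if_neg hγ, rk2_apply, Ff_bv, Ff_bv, cf_self, cf_self]
  norm_num [c1v0, c1v1]
  have : (873 : K) = 874 - 1 := by decide
  rw [this]
  module

lemma xm_eig1 (γ : V) (hγ : γ ≠ β) : xm G β γ (bv γ 1) = (974 : K) • bv γ 1 := by
  rw [xm, if_neg hγ, rk2_apply, Ff_bv, Ff_bv, cf_self, cf_self]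
  norm_num [c1v0, c1v1]
  have : (973 : K) = 974 - 1 := by decide
  rw [this]
  module

lemma pow_eig {M : Type*} [AddCommGroup M] [Module K M] (f : Module.End K M)
    (v : M) (μ : K) (h : f v = μ • v) (m : ℕ) : (f ^ m) v = μ ^ m • v := by
  induction m with
  | zero => simp
  | succ m ih =>
    rw [pow_succ', Module.End.mul_apply, ih, map_smul, h, smul_smul, pow_succ', mul_comm]

/-- The special generator `β` has no eigenvector with eigenvalue `μ ∉ {1, ζ², ζ⁻²}`. -/
lemma no_eig_beta (μ : K) (h1 : μ - 1 - 732 ≠ 0) (h2 : μ - 1 - 1256 ≠ 0) (h0 : μ ≠ 1)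
    (w : WV V) (hw : w ≠ 0) (heq : xm G β β w = μ • w) : False := by
  rw [xm, if_pos rfl, rk2_apply] at heq
  set t0 := Ff G β β 0 w with ht0
  set t1 := Ff G β β 1 w with ht1
  have hc0 : c2v 0 = 732 := rfl
  have hc1 : c2v 1 = 1256 := rfl
  rw [hc0, hc1] at heq
  have e : μ • w - w = (732 * t0) • bv β 0 + (1256 * t1) • bv β 1 := by
    rw [← heq]; abel
  have e0 := congrArg (Ff G β β 0) e
  have e1 := congrArg (Ff G β β 1) e
  rw [map_sub, map_smul, map_add, map_smul, map_smul, Ff_bv, Ff_bv, cf_self, cf_self] at e0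
  rw [map_sub, map_smul, map_add, map_smul, map_smul, Ff_bv, Ff_bv, cf_self, cf_self] at e1
  simp only [← ht0, ← ht1, smul_eq_mul, if_true, if_false, mul_one, mul_zero,
    show ((0:Fin 2) = (0:Fin 2)) = True by simp,
    show ((0:Fin 2) = (1:Fin 2)) = False by simp,
    show ((1:Fin 2) = (0:Fin 2)) = False by simp,
    show ((1:Fin 2) = (1:Fin 2)) = True by simp, add_zero, zero_add] at e0 e1
  -- e0 : μ * t0 - t0 = 732 * t0,  e1 : μ * t1 - t1 = 1256 * t1
  have ht0z : t0 = 0 := by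
    have : (μ - 1 - 732) * t0 = 0 := by ring_nf; ring_nf at e0; linear_combination e0
    rcases mul_eq_zero.mp this with h | h
    · exact absurd h h1
    · exact h
  have ht1z : t1 = 0 := by
    have : (μ - 1 - 1256) * t1 = 0 := by ring_nf; ring_nf at e1; linear_combination e1
    rcases mul_eq_zero.mp this with h | h
    · exact absurd h h2
    · exact h
  rw [ht0z, ht1z] at e
  simp only [mul_zero, zero_smul, add_zero] at e
  have hμ1 : μ - 1 ≠ 0 := sub_ne_zero.mpr h0
  have : (μ - 1) • w = 0 := by
    have : μ • w - w = (μ - 1) • w := by module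
    rw [← this, e]
  have := congrArg (fun z => (μ - 1)⁻¹ • z) this
  simp only [smul_smul, inv_mul_cancel₀ hμ1, one_smul, smul_zero] at this
  exact hw this

end Graph

end

end WilliamsAux

/-- If `g v_α^k g⁻¹ = h v_β^ℓ h⁻¹` in `H(G)` with `k, ℓ ∈ {1,-1}`, then `α = β`. -/
theorem stmt12 {V : Type*} [Infinite V] (G : SimpleGraph V) (α β : V) (k ℓ : ℤ)
    (hk : k = 1 ∨ k = -1) (hℓ : ℓ = 1 ∨ ℓ = -1) (g h : HGrp G)
    (heq : g * vg G α ^ k * g⁻¹ = h * vg G β ^ ℓ * h⁻¹) : α = β := by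
  classical
  by_contra hne
  -- Build the representation adapted to β.
  open WilliamsAux in
  let φ : HGrp G →* (Module.End K (WV V))ˣ :=
    PresentedGroup.toGroup (WilliamsAux.lift_rels G β)
  have hof : ∀ γ : V, φ (vg G γ) = WilliamsAux.um G β γ := fun γ =>
    PresentedGroup.toGroup.of (WilliamsAux.lift_rels G β)
  have h1 := congrArg φ heq
  simp only [map_mul, map_inv, map_zpow, hof] at h1
  -- h1 : φ g * (um α)^k * (φ g)⁻¹ = φ h * (um β)^ℓ * (φ h)⁻¹
  have hconj : ((φ h)⁻¹ * φ g) * (WilliamsAux.um G β α) ^ k * ((φ h)⁻¹ * φ g)⁻¹ =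
      (WilliamsAux.um G β β) ^ ℓ := by
    calc ((φ h)⁻¹ * φ g) * (WilliamsAux.um G β α) ^ k * ((φ h)⁻¹ * φ g)⁻¹
        = (φ h)⁻¹ * (φ g * (WilliamsAux.um G β α) ^ k * (φ g)⁻¹) * φ h := by group
      _ = (φ h)⁻¹ * (φ h * (WilliamsAux.um G β β) ^ ℓ * (φ h)⁻¹) * φ h := by rw [h1]
      _ = (WilliamsAux.um G β β) ^ ℓ := by group
  set c : (Module.End K (WilliamsAux.WV V))ˣ := (φ h)⁻¹ * φ g with hc
  -- The α-side has an eigenvector with eigenvalue ζ = 874.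
  obtain ⟨v₀, hv₀ne, hv₀⟩ : ∃ v₀ : WilliamsAux.WV V, v₀ ≠ 0 ∧
      ((WilliamsAux.um G β α ^ k : (Module.End K (WilliamsAux.WV V))ˣ) :
        Module.End K (WilliamsAux.WV V)) v₀ = (874 : K) • v₀ := by
    rcases hk with rfl | rfl
    · refine ⟨WilliamsAux.bv α 0, WilliamsAux.bv_ne_zero α 0, ?_⟩
      rw [zpow_one]
      exact WilliamsAux.xm_eig0 G β α hne
    · refine ⟨WilliamsAux.bv α 1, WilliamsAux.bv_ne_zero α 1, ?_⟩
      rw [zpow_neg_one]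
      show ((WilliamsAux.um G β α)⁻¹ : (Module.End K (WilliamsAux.WV V))ˣ).val _ = _
      have hval : ((WilliamsAux.um G β α)⁻¹ :
          (Module.End K (WilliamsAux.WV V))ˣ).val = WilliamsAux.xm G β α ^ 6 := rfl
      rw [hval, WilliamsAux.pow_eig _ _ _ (WilliamsAux.xm_eig1 G β α hne) 6]
      have : (974 : K) ^ 6 = 874 := by decide
      rw [this]
  -- Transport the eigenvector to the β-side.
  have hcval := congrArg Units.val hconj
  simp only [Units.val_mul] at hcval
  have hcinv : ∀ w : WilliamsAux.WV V,
      ((c⁻¹ : (Module.End K (WilliamsAux.WV V))ˣ) : Module.End K (WilliamsAux.WV V))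
        (((c : (Module.End K (WilliamsAux.WV V))ˣ) :
          Module.End K (WilliamsAux.WV V)) w) = w := by
    intro w
    have : ((c⁻¹ : (Module.End K (WilliamsAux.WV V))ˣ) :
        Module.End K (WilliamsAux.WV V)) * c = 1 := by
      rw [← Units.val_mul, inv_mul_cancel, Units.val_one]
    calc _ = (((c⁻¹ : (Module.End K (WilliamsAux.WV V))ˣ) :
        Module.End K (WilliamsAux.WV V)) * c) w := rfl
      _ = w := by rw [this, Module.End.one_apply]
  set cv : WilliamsAux.WV V := ((c : (Module.End K (WilliamsAux.WV V))ˣ) :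
    Module.End K (WilliamsAux.WV V)) v₀ with hcv
  have hcvne : cv ≠ 0 := by
    intro h0
    apply hv₀ne
    have := hcinv v₀
    rw [← hcv, h0, map_zero] at this
    exact this.symm
  have hev : ((WilliamsAux.um G β β ^ ℓ : (Module.End K (WilliamsAux.WV V))ˣ) :
      Module.End K (WilliamsAux.WV V)) cv = (874 : K) • cv := by
    have happ := congrArg (fun f : Module.End K (WilliamsAux.WV V) => f cv) hcval
    simp only [Module.End.mul_apply] at happ
    rw [← happ, hcv, hcinv v₀, hv₀, map_smul]
  -- Contradiction: β-side has eigenvalues only in {1, ζ², ζ⁻²}.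
  rcases hℓ with rfl | rfl
  · rw [zpow_one] at hev
    exact WilliamsAux.no_eig_beta G β 874 (by decide) (by decide) (by decide) cv hcvne hev
  · rw [zpow_neg_one] at hev
    have hval : ((WilliamsAux.um G β β)⁻¹ :
        (Module.End K (WilliamsAux.WV V))ˣ).val = WilliamsAux.xm G β β ^ 6 := rfl
    rw [hval] at hev
    -- apply xm β once more: xm β (874 • cv) = cv
    have h7 : (WilliamsAux.xm G β β ^ 7) cv = WilliamsAux.xm G β β ((874 : K) • cv) := by
      rw [pow_succ', Module.End.mul_apply, hev]
    rw [WilliamsAux.xm_pow_seven G β β, Module.End.one_apply, map_smul] at h7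
    have hev2 : WilliamsAux.xm G β β cv = (974 : K) • cv := by
      have := congrArg (fun z => (974 : K) • z) h7
      simp only [smul_smul] at this
      have h974 : (974 : K) * 874 = 1 := by decide
      rw [h974, one_smul] at this
      rw [← this]
    exact WilliamsAux.no_eig_beta G β 974 (by decide) (by decide) (by decide) cv hcvne hev2
end

section
/- Let κ be an infinite cardinal and fix real numbers r₀, r₁ with 0 < r₀ < r₁ ≤ 2·r₀. For a simple graph G on vertex set κ define d_G : κ × κ → ℝ by d_G(α,β) = 0 if α = β, d_G(α,β) = r₀ if α and β are adjacent in G, and d_G(α,β) = r₁ if α ≠ β are not adjacent in G. Then: (a) d_G is a metric on κ; and (b) for all simple graphs G, G' on κ, there is a graph embedding of G into G' (an injection h : κ → κ with: α, β adjacent in G iff h(α), h(β) adjacent in G') if and only if there is an isometric embedding of (κ, d_G) into (κ, d_{G'}) (a map f : κ → κ with d_{G'}(f(α), f(β)) = d_G(α,β) for all α, β). -/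
open Classical in
/-- The distance function on the vertex set of a graph `G`: `0` on the diagonal,
`r0` between adjacent vertices, `r1` between distinct non-adjacent vertices. -/
noncomputable def dGr {V : Type*} (r0 r1 : ℝ) (G : SimpleGraph V) (α β : V) : ℝ :=
  if α = β then 0 else if G.Adj α β then r0 else r1

/-- For `0 < r0 < r1 ≤ 2 r0`: (a) `d_G` is a metric on the (infinite) vertex set; and
(b) `G` embeds into `G'` as a graph iff `(κ, d_G)` isometrically embeds into `(κ, d_G')`. -/
theorem stmt19 {V : Type*} [Infinite V] (r0 r1 : ℝ)
    (h0 : 0 < r0) (h1 : r0 < r1) (h2 : r1 ≤ 2 * r0) :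
    (∀ G : SimpleGraph V,
      (∀ α β : V, dGr r0 r1 G α β = 0 ↔ α = β) ∧
      (∀ α β : V, dGr r0 r1 G α β = dGr r0 r1 G β α) ∧
      (∀ α β γ : V, dGr r0 r1 G α γ ≤ dGr r0 r1 G α β + dGr r0 r1 G β γ)) ∧
    (∀ G G' : SimpleGraph V,
      (∃ h : V → V, Function.Injective h ∧ ∀ α β : V, G.Adj α β ↔ G'.Adj (h α) (h β)) ↔
      (∃ f : V → V, ∀ α β : V, dGr r0 r1 G' (f α) (f β) = dGr r0 r1 G α β)) := by
  have hr1 : (0:ℝ) < r1 := h0.trans h1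
  have hge : ∀ (G : SimpleGraph V) (a b : V), a ≠ b → r0 ≤ dGr r0 r1 G a b := by
    intro G a b h
    unfold dGr
    split_ifs with h' h''
    · exact absurd h' h
    · exact le_refl r0
    · linarith
  constructor
  · intro G
    refine ⟨?_, ?_, ?_⟩
    · intro a b
      unfold dGr
      split_ifs with h h'
      · simp [h]
      · constructor <;> intro hh
        · linarith
        · exact absurd hh h
      · constructor <;> intro hh
        · linarith
        · exact absurd hh h
    · intro a b
      unfold dGr
      rcases eq_or_ne a b with h | h
      · simp [h]
      · rw [if_neg h, if_neg h.symm]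
        rcases Classical.em (G.Adj a b) with hg | hg
        · rw [if_pos hg, if_pos (G.adj_symm hg)]
        · rw [if_neg hg, if_neg (fun hh => hg (G.adj_symm hh))]
    · intro a b c
      rcases eq_or_ne a c with hac | hac
      · have h1' : 0 ≤ dGr r0 r1 G a b := by
          unfold dGr; split_ifs <;> linarith
        have h2' : 0 ≤ dGr r0 r1 G b c := by
          unfold dGr; split_ifs <;> linarith
        rw [show dGr r0 r1 G a c = 0 by simp [dGr, hac]]
        linarith
      · have hle : dGr r0 r1 G a c ≤ r1 := by
          unfold dGr; split_ifs <;> linarith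
        rcases eq_or_ne a b with hab | hab
        · subst hab
          have : dGr r0 r1 G a a = 0 := by simp [dGr]
          linarith
        rcases eq_or_ne b c with hbc | hbc
        · subst hbc
          have : dGr r0 r1 G b b = 0 := by simp [dGr]
          linarith
        · have g1 := hge G a b hab
          have g2 := hge G b c hbc
          linarith
  · intro G G'
    constructor
    · rintro ⟨h, hinj, hadj⟩
      refine ⟨h, fun a b => ?_⟩
      unfold dGr
      rcases eq_or_ne a b with hab | hab
      · simp [hab]
      · have : h a ≠ h b := fun hh => hab (hinj hh)
        rw [if_neg this, if_neg hab]
        rcases Classical.em (G.Adj a b) with hg | hg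
        · rw [if_pos ((hadj a b).mp hg), if_pos hg]
        · rw [if_neg (fun hh => hg ((hadj a b).mpr hh)), if_neg hg]
    · rintro ⟨f, hf⟩
      have hinj : Function.Injective f := by
        intro a b hab
        by_contra hne
        have := hf a b
        rw [show dGr r0 r1 G' (f a) (f b) = 0 by simp [dGr, hab]] at this
        have := hge G a b hne
        linarith
      refine ⟨f, hinj, fun a b => ?_⟩
      constructor
      · intro hg
        have hab : a ≠ b := G.ne_of_adj hg
        have hd : dGr r0 r1 G a b = r0 := by simp [dGr, hab, hg]
        have := hf a b
        rw [hd] at this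
        by_contra hg'
        have hfne : f a ≠ f b := fun hh => hab (hinj hh)
        rw [show dGr r0 r1 G' (f a) (f b) = r1 by simp [dGr, hfne, hg']] at this
        linarith
      · intro hg
        have hfne : f a ≠ f b := G'.ne_of_adj hg
        have hab : a ≠ b := fun hh => hfne (by rw [hh])
        have hd : dGr r0 r1 G' (f a) (f b) = r0 := by simp [dGr, hfne, hg]
        have := hf a b
        rw [hd] at this
        by_contra hg'
        rw [show dGr r0 r1 G a b = r1 by simp [dGr, hab, hg']] at this
        linarith
end
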